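/- arXiv:2401.01109 — 6 statements merged into one kernel-verified Lean document; each statement's English description precedes it below -/
import Mathlib

section
/- For $0<q<1$ and all complex $z$ with $|z|<1$, one has the identity $\sum_{k=0}^{\infty} \frac{z^k}{(q;q)_k^2} = \frac{1}{(q;q)_\infty} \sum_{n=0}^{\infty} \frac{(-1)^n q^{n(n+1)/2}}{(q;q)_n} \cdot \frac{1}{(q^n z;q)_\infty}$. -/
open Filter Finset Asymptotics

/-- Finite q-Pochhammer symbol `(a;q)_n` over `ℂ`. -/
noncomputable def qpC (q a : ℂ) (n : ℕ) : ℂ := ∏ i ∈ Finset.range n, (1 - a * q ^ i)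

/-- Infinite q-Pochhammer symbol `(a;q)_∞` over `ℂ`. -/
noncomputable def qpiC (q a : ℂ) : ℂ := ∏' i : ℕ, (1 - a * q ^ i)

/-- Finite q-Pochhammer symbol `(a;q)_n` over `ℝ`. -/
noncomputable def qpR (q a : ℝ) (n : ℕ) : ℝ := ∏ i ∈ Finset.range n, (1 - a * q ^ i)

/-- Infinite q-Pochhammer symbol `(a;q)_∞` over `ℝ`. -/
noncomputable def qpiR (q a : ℝ) : ℝ := ∏' i : ℕ, (1 - a * q ^ i)

open Topology

set_option maxHeartbeats 1000000

namespace QAux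

variable {q : ℝ}

lemma tri (n : ℕ) : n*(n+1)/2 = n*(n-1)/2 + n := by
  have h : n*(n+1) = n*(n-1) + 2*n := by
    cases n with
    | zero => rfl
    | succ m => simp [Nat.succ_sub_one]; ring
  rw [h, Nat.add_mul_div_left _ _ (by norm_num : (0:ℕ) < 2)]

lemma fac_pos (hq0 : 0 < q) (hq1 : q < 1) (i : ℕ) : 0 < 1 - q * q ^ i := by
  have h1 : q ^ i ≤ 1 := pow_le_one₀ hq0.le hq1.le
  nlinarith

lemma qpR_q_pos (hq0 : 0 < q) (hq1 : q < 1) (k : ℕ) : 0 < qpR q q k :=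
  Finset.prod_pos fun i _ => fac_pos hq0 hq1 i

lemma qpC_eq_real (k : ℕ) : qpC (q:ℂ) (q:ℂ) k = ((qpR q q k : ℝ) : ℂ) := by
  rw [qpC, qpR]; push_cast; rfl

lemma qpC_ne (hq0 : 0 < q) (hq1 : q < 1) (k : ℕ) : qpC (q:ℂ) (q:ℂ) k ≠ 0 := by
  rw [qpC_eq_real]
  exact_mod_cast (qpR_q_pos hq0 hq1 k).ne'

lemma cfac_ne (hq0 : 0 < q) (hq1 : q < 1) (i : ℕ) : (1:ℂ) - (q:ℂ) * (q:ℂ) ^ i ≠ 0 := by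
  have : ((1 - q * q ^ i : ℝ) : ℂ) ≠ 0 := by exact_mod_cast (fac_pos hq0 hq1 i).ne'
  simpa using this

lemma qpC_succ (a : ℂ) (k : ℕ) : qpC (q:ℂ) a (k+1) = qpC (q:ℂ) a k * (1 - a * (q:ℂ) ^ k) :=
  Finset.prod_range_succ _ _

lemma qpR_succ (a : ℝ) (k : ℕ) : qpR q a (k+1) = qpR q a k * (1 - a * q ^ k) :=
  Finset.prod_range_succ _ _

lemma norm_term (hq0 : 0 < q) (hq1 : q < 1) (w : ℂ) (k : ℕ) :
    ‖w ^ k / qpC (q:ℂ) (q:ℂ) k‖ = ‖w‖ ^ k / qpR q q k := by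
  rw [qpC_eq_real, norm_div, norm_pow, Complex.norm_real,
    Real.norm_of_nonneg (qpR_q_pos hq0 hq1 k).le]

/-- generic ratio test for positive real sequences -/
lemma summable_of_pos_ratio (f : ℕ → ℝ) (hf : ∀ k, 0 < f k) {l : ℝ} (hl : l < 1)
    (h : Tendsto (fun k => f (k+1) / f k) atTop (𝓝 l)) : Summable f := by
  apply summable_of_ratio_test_tendsto_lt_one hl (Eventually.of_forall fun k => (hf k).ne')
  have heq : (fun k => ‖f (k+1)‖ / ‖f k‖) = fun k => f (k+1) / f k := by
    funext k; rw [Real.norm_of_nonneg (hf _).le, Real.norm_of_nonneg (hf _).le]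
  rw [heq]; exact h

lemma tendsto_fac (hq0 : 0 < q) (hq1 : q < 1) :
    Tendsto (fun k : ℕ => 1 - q * q ^ k) atTop (𝓝 1) := by
  have h := (tendsto_pow_atTop_nhds_zero_of_lt_one hq0.le hq1).const_mul q
  simpa using tendsto_const_nhds.sub h

lemma summable_S1 (hq0 : 0 < q) (hq1 : q < 1) {r : ℝ} (h0 : 0 ≤ r) (h1 : r < 1) :
    Summable (fun k => r ^ k / qpR q q k) := by
  rcases eq_or_lt_of_le h0 with h | h
  · apply summable_of_ne_finset_zero (s := {0})
    intro k hk
    simp only [Finset.mem_singleton] at hk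
    rw [← h, zero_pow hk, zero_div]
  · have hpos : ∀ k, 0 < r ^ k / qpR q q k :=
      fun k => div_pos (pow_pos h k) (qpR_q_pos hq0 hq1 k)
    apply summable_of_pos_ratio _ hpos h1
    have hten : Tendsto (fun k : ℕ => r / (1 - q * q ^ k)) atTop (𝓝 r) := by
      have h := (tendsto_const_nhds (x := r) (f := atTop)).div (tendsto_fac hq0 hq1) one_ne_zero
      rw [div_one] at h; exact h
    have heq : (fun k => (r ^ (k+1) / qpR q q (k+1)) / (r ^ k / qpR q q k)) =
        fun k => r / (1 - q * q ^ k) := by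
      funext k
      rw [qpR_succ, pow_succ]
      have h1 := (qpR_q_pos hq0 hq1 k).ne'
      have h2 := (fac_pos hq0 hq1 k).ne'
      have h3 := (pow_pos h k).ne'
      field_simp
    rw [← heq] at hten; exact hten

lemma summable_S2 (hq0 : 0 < q) (hq1 : q < 1) {r : ℝ} (h0 : 0 ≤ r) (h1 : r < 1) :
    Summable (fun k => r ^ k / (qpR q q k) ^ 2) := by
  rcases eq_or_lt_of_le h0 with h | h
  · apply summable_of_ne_finset_zero (s := {0})
    intro k hk
    simp only [Finset.mem_singleton] at hk
    rw [← h, zero_pow hk, zero_div]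
  · have hpos : ∀ k, 0 < r ^ k / (qpR q q k) ^ 2 :=
      fun k => div_pos (pow_pos h k) (pow_pos (qpR_q_pos hq0 hq1 k) 2)
    apply summable_of_pos_ratio _ hpos h1
    have hten : Tendsto (fun k : ℕ => r / (1 - q * q ^ k) ^ 2) atTop (𝓝 r) := by
      have := ((tendsto_fac hq0 hq1).pow 2)
      have h := (tendsto_const_nhds (x := r) (f := atTop)).div this (by norm_num)
      simp only [one_pow, div_one] at h; exact h
    have heq : (fun k => (r ^ (k+1) / (qpR q q (k+1)) ^ 2) / (r ^ k / (qpR q q k) ^ 2)) =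
        fun k => r / (1 - q * q ^ k) ^ 2 := by
      funext k
      rw [qpR_succ, pow_succ]
      have h1 := (qpR_q_pos hq0 hq1 k).ne'
      have h2 := (fac_pos hq0 hq1 k).ne'
      have h3 := (pow_pos h k).ne'
      field_simp
    rw [← heq] at hten; exact hten

lemma summable_S3 (hq0 : 0 < q) (hq1 : q < 1) {r : ℝ} (h0 : 0 ≤ r) :
    Summable (fun n => q ^ (n*(n-1)/2) * r ^ n / qpR q q n) := by
  rcases eq_or_lt_of_le h0 with h | h
  · apply summable_of_ne_finset_zero (s := {0})
    intro k hk
    simp only [Finset.mem_singleton] at hk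
    rw [← h, zero_pow hk, mul_zero, zero_div]
  · have hpos : ∀ n, 0 < q ^ (n*(n-1)/2) * r ^ n / qpR q q n :=
      fun n => div_pos (mul_pos (pow_pos hq0 _) (pow_pos h n)) (qpR_q_pos hq0 hq1 n)
    apply summable_of_pos_ratio _ hpos (by norm_num : (0:ℝ) < 1)
    have hten : Tendsto (fun n : ℕ => (q ^ n * r) / (1 - q * q ^ n)) atTop (𝓝 0) := by
      have h1 := (tendsto_pow_atTop_nhds_zero_of_lt_one hq0.le hq1).mul_const r
      have h := h1.div (tendsto_fac hq0 hq1) one_ne_zero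
      simp only [zero_mul, zero_div] at h; exact h
    have heq : (fun n => (q ^ ((n+1)*((n+1)-1)/2) * r ^ (n+1) / qpR q q (n+1)) /
        (q ^ (n*(n-1)/2) * r ^ n / qpR q q n)) = fun n => (q ^ n * r) / (1 - q * q ^ n) := by
      funext n
      have he : (n+1)*((n+1)-1)/2 = n*(n-1)/2 + n := by
        have := tri n
        simpa [Nat.succ_sub_one, Nat.mul_comm] using this
      rw [he, pow_add, qpR_succ, pow_succ]
      have h1 := (qpR_q_pos hq0 hq1 n).ne'
      have h2 := (fac_pos hq0 hq1 n).ne'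
      have h3 := (pow_pos h n).ne'
      have h4 := (pow_pos hq0 (n*(n-1)/2)).ne'
      field_simp
    rw [← heq] at hten; exact hten

lemma norm_q_pow (hq0 : 0 < q) (n : ℕ) : ‖((q:ℂ)) ^ n‖ = q ^ n := by
  rw [norm_pow, Complex.norm_real, Real.norm_of_nonneg hq0.le]

/-- complex summability of the Euler A series -/
lemma summable_A (hq0 : 0 < q) (hq1 : q < 1) {w : ℂ} (hw : ‖w‖ < 1) :
    Summable (fun k => w ^ k / qpC (q:ℂ) (q:ℂ) k) := by
  apply Summable.of_norm
  have heq : (fun k => ‖w ^ k / qpC (q:ℂ) (q:ℂ) k‖) = fun k => ‖w‖ ^ k / qpR q q k := by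
    funext k; exact norm_term hq0 hq1 w k
  rw [heq]
  exact summable_S1 hq0 hq1 (norm_nonneg w) hw

/-- multipliability of the q-Pochhammer product -/
lemma multQ (hq0 : 0 < q) (hq1 : q < 1) {w : ℂ} (hw : ‖w‖ < 1) :
    Multipliable (fun i : ℕ => 1 - w * (q:ℂ) ^ i) := by
  have hnorm : ∀ i : ℕ, ‖w * (q:ℂ) ^ i‖ = ‖w‖ * q ^ i := by
    intro i; rw [norm_mul, norm_q_pow hq0]
  have hfac : ∀ i : ℕ, ‖w * (q:ℂ) ^ i‖ < 1 := by
    intro i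
    rw [hnorm]
    calc ‖w‖ * q ^ i ≤ ‖w‖ * 1 :=
          mul_le_mul_of_nonneg_left (pow_le_one₀ hq0.le hq1.le) (norm_nonneg w)
      _ = ‖w‖ := mul_one _
      _ < 1 := hw
  have hne : ∀ i : ℕ, (1 : ℂ) - w * (q:ℂ) ^ i ≠ 0 := by
    intro i h
    have h2 : w * (q:ℂ) ^ i = 1 := by linear_combination -h
    have h3 := hfac i
    rw [h2, norm_one] at h3
    exact absurd h3 (lt_irrefl 1)
  have hsum : Summable fun i : ℕ => Complex.log (1 - w * (q:ℂ) ^ i) := by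
    have hgeo : Summable fun i : ℕ => (3/2 : ℝ) * (‖w‖ * q ^ i) :=
      (((summable_geometric_of_lt_one hq0.le hq1).mul_left ‖w‖).mul_left _)
    apply hgeo.of_norm_bounded_eventually
    rw [Nat.cofinite_eq_atTop]
    have hev : ∀ᶠ i : ℕ in atTop, q ^ i < 1/2 :=
      (tendsto_pow_atTop_nhds_zero_of_lt_one hq0.le hq1).eventually_lt_const (by norm_num)
    filter_upwards [hev] with i hi
    have hle : ‖-(w * (q:ℂ) ^ i)‖ ≤ 1/2 := by
      rw [norm_neg, hnorm]
      calc ‖w‖ * q ^ i ≤ 1 * q ^ i := mul_le_mul_of_nonneg_right hw.le (pow_nonneg hq0.le i)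
        _ = q ^ i := one_mul _
        _ ≤ 1/2 := hi.le
    have := Complex.norm_log_one_add_half_le_self hle
    rw [← sub_eq_add_neg] at this
    calc ‖Complex.log (1 - w * (q:ℂ) ^ i)‖ ≤ 3/2 * ‖-(w * (q:ℂ) ^ i)‖ := this
      _ = 3/2 * (‖w‖ * q ^ i) := by rw [norm_neg, hnorm]
  exact Complex.multipliable_of_summable_log hsum

lemma tendsto_qpC (hq0 : 0 < q) (hq1 : q < 1) {w : ℂ} (hw : ‖w‖ < 1) :
    Tendsto (fun N => qpC (q:ℂ) w N) atTop (𝓝 (qpiC (q:ℂ) w)) :=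
  (multQ hq0 hq1 hw).hasProd.tendsto_prod_nat

/-- Tendsto of the series value at `q^N * w` to 1. -/
lemma tendsto_one_aux (hq0 : 0 < q) (hq1 : q < 1) (c : ℕ → ℂ) (hc0 : c 0 = 1) {r : ℝ}
    (hr : Summable fun n => ‖c n‖ * r ^ n) {w : ℂ} (hw : ‖w‖ ≤ r) :
    Tendsto (fun N : ℕ => ∑' n, c n * ((q:ℂ) ^ N * w) ^ n) atTop (𝓝 1) := by
  have h0r : (0:ℝ) ≤ r := le_trans (norm_nonneg w) hw
  have hqpow : ∀ N : ℕ, (0:ℝ) ≤ q ^ N := fun N => pow_nonneg hq0.le N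
  have hqle1 : ∀ N : ℕ, q ^ N ≤ 1 := fun N => pow_le_one₀ hq0.le hq1.le
  have hnw : ∀ N n : ℕ, ‖c n * ((q:ℂ) ^ N * w) ^ n‖ = ‖c n‖ * (q ^ N * ‖w‖) ^ n := by
    intro N n
    rw [norm_mul, norm_pow, norm_mul, norm_q_pow hq0]
  have hsum : ∀ N : ℕ, Summable fun n => c n * ((q:ℂ) ^ N * w) ^ n := by
    intro N
    apply hr.of_norm_bounded
    intro n
    rw [hnw]
    have hb : q ^ N * ‖w‖ ≤ r := by
      calc q ^ N * ‖w‖ ≤ 1 * ‖w‖ := mul_le_mul_of_nonneg_right (hqle1 N) (norm_nonneg w)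
        _ = ‖w‖ := one_mul _
        _ ≤ r := hw
    exact mul_le_mul_of_nonneg_left (pow_le_pow_left₀ (mul_nonneg (hqpow N) (norm_nonneg w)) hb n)
      (norm_nonneg _)
  have htail : Summable fun n => ‖c (n+1)‖ * r ^ (n+1) := (summable_nat_add_iff 1).2 hr
  set C : ℝ := ∑' n, ‖c (n+1)‖ * r ^ (n+1) with hC
  have hpt : ∀ N n : ℕ, ‖c (n+1) * ((q:ℂ) ^ N * w) ^ (n+1)‖ ≤ q ^ N * (‖c (n+1)‖ * r ^ (n+1)) := by
    intro N n
    rw [hnw]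
    have h1 : (q ^ N * ‖w‖) ^ (n+1) ≤ q ^ N * r ^ (n+1) := by
      rw [mul_pow, ← pow_mul]
      have ha : q ^ (N * (n+1)) ≤ q ^ N :=
        pow_le_pow_of_le_one hq0.le hq1.le (Nat.le_mul_of_pos_right N n.succ_pos)
      have hb : ‖w‖ ^ (n+1) ≤ r ^ (n+1) := pow_le_pow_left₀ (norm_nonneg w) hw (n+1)
      exact mul_le_mul ha hb (pow_nonneg (norm_nonneg w) _) (hqpow N)
    calc ‖c (n+1)‖ * (q ^ N * ‖w‖) ^ (n+1) ≤ ‖c (n+1)‖ * (q ^ N * r ^ (n+1)) :=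
          mul_le_mul_of_nonneg_left h1 (norm_nonneg _)
      _ = q ^ N * (‖c (n+1)‖ * r ^ (n+1)) := by ring
  have hbound : ∀ N : ℕ, ‖(∑' n, c n * ((q:ℂ) ^ N * w) ^ n) - 1‖ ≤ q ^ N * C := by
    intro N
    rw [Summable.tsum_eq_zero_add (hsum N)]
    have hz : c 0 * ((q:ℂ) ^ N * w) ^ 0 = 1 := by rw [hc0, pow_zero, mul_one]
    rw [hz, add_sub_cancel_left]
    have hsnorm : Summable fun n => ‖c (n+1) * ((q:ℂ) ^ N * w) ^ (n+1)‖ := by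
      apply Summable.of_nonneg_of_le (fun n => norm_nonneg _) (hpt N)
      exact htail.mul_left _
    calc ‖∑' n, c (n+1) * ((q:ℂ) ^ N * w) ^ (n+1)‖
        ≤ ∑' n, ‖c (n+1) * ((q:ℂ) ^ N * w) ^ (n+1)‖ := norm_tsum_le_tsum_norm hsnorm
      _ ≤ ∑' n, q ^ N * (‖c (n+1)‖ * r ^ (n+1)) :=
          Summable.tsum_le_tsum (hpt N) hsnorm (htail.mul_left _)
      _ = q ^ N * C := by rw [tsum_mul_left]
  have hzero : Tendsto (fun N : ℕ => q ^ N * C) atTop (𝓝 0) := by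
    simpa using (tendsto_pow_atTop_nhds_zero_of_lt_one hq0.le hq1).mul_const C
  have := squeeze_zero_norm hbound hzero
  rwa [tendsto_sub_nhds_zero_iff] at this


lemma stepA (hq0 : 0 < q) (hq1 : q < 1) {u : ℂ} (hu : ‖u‖ < 1) :
    ∑' k, ((q:ℂ) * u) ^ k / qpC (q:ℂ) (q:ℂ) k =
      (1 - u) * ∑' k, u ^ k / qpC (q:ℂ) (q:ℂ) k := by
  have hqu : ‖(q:ℂ) * u‖ < 1 := by
    rw [norm_mul, Complex.norm_real, Real.norm_of_nonneg hq0.le]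
    calc q * ‖u‖ ≤ 1 * ‖u‖ := mul_le_mul_of_nonneg_right hq1.le (norm_nonneg u)
      _ = ‖u‖ := one_mul _
      _ < 1 := hu
  have hSu := summable_A hq0 hq1 hu
  have hSqu := summable_A hq0 hq1 hqu
  have key : (∑' k, u ^ k / qpC (q:ℂ) (q:ℂ) k) - (∑' k, ((q:ℂ) * u) ^ k / qpC (q:ℂ) (q:ℂ) k)
      = u * ∑' k, u ^ k / qpC (q:ℂ) (q:ℂ) k := by
    rw [← Summable.tsum_sub hSu hSqu]
    rw [Summable.tsum_eq_zero_add (hSu.sub hSqu)]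
    have h0 : u ^ 0 / qpC (q:ℂ) (q:ℂ) 0 - ((q:ℂ) * u) ^ 0 / qpC (q:ℂ) (q:ℂ) 0 = 0 := by
      simp [qpC]
    rw [h0, zero_add]
    have hterm : ∀ k : ℕ,
        u ^ (k+1) / qpC (q:ℂ) (q:ℂ) (k+1) - ((q:ℂ) * u) ^ (k+1) / qpC (q:ℂ) (q:ℂ) (k+1)
        = u * (u ^ k / qpC (q:ℂ) (q:ℂ) k) := by
      intro k
      rw [qpC_succ]
      have h1 := qpC_ne hq0 hq1 k
      have h2 := cfac_ne hq0 hq1 k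
      field_simp
      ring
    rw [tsum_congr hterm, tsum_mul_left]
  linear_combination -key

lemma iterA (hq0 : 0 < q) (hq1 : q < 1) {w : ℂ} (hw : ‖w‖ < 1) (N : ℕ) :
    ∑' k, ((q:ℂ) ^ N * w) ^ k / qpC (q:ℂ) (q:ℂ) k =
      qpC (q:ℂ) w N * ∑' k, w ^ k / qpC (q:ℂ) (q:ℂ) k := by
  induction N with
  | zero => simp [qpC]
  | succ N ih =>
    have hu : ‖(q:ℂ) ^ N * w‖ < 1 := by
      rw [norm_mul, norm_q_pow hq0]
      calc q ^ N * ‖w‖ ≤ 1 * ‖w‖ :=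
            mul_le_mul_of_nonneg_right (pow_le_one₀ hq0.le hq1.le) (norm_nonneg w)
        _ = ‖w‖ := one_mul _
        _ < 1 := hw
    have hstep := stepA hq0 hq1 hu
    have harg : ((q:ℂ) ^ (N+1) * w) = (q:ℂ) * ((q:ℂ) ^ N * w) := by ring
    rw [harg, hstep, ih, qpC_succ]
    ring

lemma eulerA (hq0 : 0 < q) (hq1 : q < 1) {w : ℂ} (hw : ‖w‖ < 1) :
    (∑' k, w ^ k / qpC (q:ℂ) (q:ℂ) k) * qpiC (q:ℂ) w = 1 := by
  have hr : Summable fun n => ‖(qpC (q:ℂ) (q:ℂ) n)⁻¹‖ * ‖w‖ ^ n := by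
    have heq : (fun n => ‖(qpC (q:ℂ) (q:ℂ) n)⁻¹‖ * ‖w‖ ^ n)
        = fun n => ‖w‖ ^ n / qpR q q n := by
      funext n
      rw [norm_inv, qpC_eq_real, Complex.norm_real,
        Real.norm_of_nonneg (qpR_q_pos hq0 hq1 n).le, div_eq_mul_inv, mul_comm]
    rw [heq]
    exact summable_S1 hq0 hq1 (norm_nonneg w) hw
  have hT1 : Tendsto (fun N : ℕ => ∑' k, (qpC (q:ℂ) (q:ℂ) k)⁻¹ * ((q:ℂ) ^ N * w) ^ k)
      atTop (𝓝 1) :=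
    tendsto_one_aux hq0 hq1 _ (by simp [qpC]) hr le_rfl
  have hT1' : Tendsto (fun N : ℕ => qpC (q:ℂ) w N * ∑' k, w ^ k / qpC (q:ℂ) (q:ℂ) k)
      atTop (𝓝 1) := by
    have heq : (fun N : ℕ => ∑' k, (qpC (q:ℂ) (q:ℂ) k)⁻¹ * ((q:ℂ) ^ N * w) ^ k)
        = fun N : ℕ => qpC (q:ℂ) w N * ∑' k, w ^ k / qpC (q:ℂ) (q:ℂ) k := by
      funext N
      rw [← iterA hq0 hq1 hw N]
      exact tsum_congr fun k => by rw [div_eq_mul_inv, mul_comm]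
    rw [← heq]; exact hT1
  have hT2 : Tendsto (fun N : ℕ => qpC (q:ℂ) w N * ∑' k, w ^ k / qpC (q:ℂ) (q:ℂ) k) atTop
      (𝓝 (qpiC (q:ℂ) w * ∑' k, w ^ k / qpC (q:ℂ) (q:ℂ) k)) :=
    (tendsto_qpC hq0 hq1 hw).mul_const _
  have h := tendsto_nhds_unique hT1' hT2
  rw [mul_comm] at h
  exact h.symm

lemma qpiC_ne (hq0 : 0 < q) (hq1 : q < 1) {w : ℂ} (hw : ‖w‖ < 1) : qpiC (q:ℂ) w ≠ 0 := by
  intro h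
  have h2 := eulerA hq0 hq1 hw
  rw [h, mul_zero] at h2
  norm_num at h2

lemma eulerA' (hq0 : 0 < q) (hq1 : q < 1) {w : ℂ} (hw : ‖w‖ < 1) :
    (∑' k, w ^ k / qpC (q:ℂ) (q:ℂ) k) = 1 / qpiC (q:ℂ) w := by
  rw [eq_div_iff (qpiC_ne hq0 hq1 hw)]
  exact eulerA hq0 hq1 hw

end QAux

/-- coefficients of the Euler B series -/
noncomputable def QAux.cB (q : ℝ) (n : ℕ) : ℂ :=
  (-1) ^ n * (q:ℂ) ^ (n*(n-1)/2) / qpC (q:ℂ) (q:ℂ) n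

namespace QAux

variable {q : ℝ}

lemma cB_succ (hq0 : 0 < q) (hq1 : q < 1) (n : ℕ) :
    cB q (n+1) = cB q n * (-(q:ℂ) ^ n) / (1 - (q:ℂ) * (q:ℂ) ^ n) := by
  have he : (n+1)*((n+1)-1)/2 = n*(n-1)/2 + n := by
    have := tri n
    simpa [Nat.succ_sub_one, Nat.mul_comm] using this
  rw [cB, cB, he, qpC_succ, pow_succ, pow_add]
  have h1 := qpC_ne hq0 hq1 n
  have h2 := cfac_ne hq0 hq1 n
  field_simp

lemma norm_cB (hq0 : 0 < q) (hq1 : q < 1) (n : ℕ) :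
    ‖cB q n‖ = q ^ (n*(n-1)/2) / qpR q q n := by
  rw [cB, norm_div, norm_mul, norm_pow, norm_neg, norm_one, one_pow, one_mul,
    norm_q_pow hq0, qpC_eq_real, Complex.norm_real,
    Real.norm_of_nonneg (qpR_q_pos hq0 hq1 n).le]

lemma summable_B (hq0 : 0 < q) (hq1 : q < 1) (x : ℂ) :
    Summable fun n => cB q n * x ^ n := by
  apply Summable.of_norm
  have heq : (fun n => ‖cB q n * x ^ n‖) = fun n => q ^ (n*(n-1)/2) * ‖x‖ ^ n / qpR q q n := by
    funext n
    rw [norm_mul, norm_pow, norm_cB hq0 hq1, div_mul_eq_mul_div]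
  rw [heq]
  exact summable_S3 hq0 hq1 (norm_nonneg x)

lemma stepB (hq0 : 0 < q) (hq1 : q < 1) (u : ℂ) :
    ∑' n, cB q n * u ^ n = (1 - u) * ∑' n, cB q n * ((q:ℂ) * u) ^ n := by
  have hSu := summable_B hq0 hq1 u
  have hSqu := summable_B hq0 hq1 ((q:ℂ) * u)
  have key : (∑' n, cB q n * u ^ n) - (∑' n, cB q n * ((q:ℂ) * u) ^ n)
      = -u * ∑' n, cB q n * ((q:ℂ) * u) ^ n := by
    rw [← Summable.tsum_sub hSu hSqu]
    rw [Summable.tsum_eq_zero_add (hSu.sub hSqu)]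
    have h0 : cB q 0 * u ^ 0 - cB q 0 * ((q:ℂ) * u) ^ 0 = 0 := by simp
    rw [h0, zero_add]
    have hterm : ∀ n : ℕ,
        cB q (n+1) * u ^ (n+1) - cB q (n+1) * ((q:ℂ) * u) ^ (n+1)
        = -u * (cB q n * ((q:ℂ) * u) ^ n) := by
      intro n
      rw [cB_succ hq0 hq1]
      have h2 := cfac_ne hq0 hq1 n
      field_simp
      linear_combination (-(cB q n * (q:ℂ) ^ n * u * u ^ n)) * mul_inv_cancel₀ h2
    rw [tsum_congr hterm, tsum_mul_left]
  linear_combination key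

lemma iterB (hq0 : 0 < q) (hq1 : q < 1) (x : ℂ) (N : ℕ) :
    ∑' n, cB q n * x ^ n =
      qpC (q:ℂ) x N * ∑' n, cB q n * ((q:ℂ) ^ N * x) ^ n := by
  induction N with
  | zero => simp [qpC]
  | succ N ih =>
    rw [ih, stepB hq0 hq1 ((q:ℂ) ^ N * x), qpC_succ]
    have harg : (q:ℂ) * ((q:ℂ) ^ N * x) = (q:ℂ) ^ (N+1) * x := by ring
    rw [harg]
    ring

lemma eulerB (hq0 : 0 < q) (hq1 : q < 1) {x : ℂ} (hx : ‖x‖ < 1) :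
    qpiC (q:ℂ) x = ∑' n, cB q n * x ^ n := by
  have hr : Summable fun n => ‖cB q n‖ * ‖x‖ ^ n := by
    have heq : (fun n => ‖cB q n‖ * ‖x‖ ^ n)
        = fun n => q ^ (n*(n-1)/2) * ‖x‖ ^ n / qpR q q n := by
      funext n
      rw [norm_cB hq0 hq1, div_mul_eq_mul_div]
    rw [heq]
    exact summable_S3 hq0 hq1 (norm_nonneg x)
  have hT1 : Tendsto (fun N : ℕ => ∑' n, cB q n * ((q:ℂ) ^ N * x) ^ n) atTop (𝓝 1) :=
    tendsto_one_aux hq0 hq1 _ (by simp [cB, qpC]) hr le_rfl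
  have hconst : Tendsto (fun N : ℕ => qpC (q:ℂ) x N * ∑' n, cB q n * ((q:ℂ) ^ N * x) ^ n)
      atTop (𝓝 (∑' n, cB q n * x ^ n)) := by
    have heq : (fun N : ℕ => qpC (q:ℂ) x N * ∑' n, cB q n * ((q:ℂ) ^ N * x) ^ n)
        = fun _ : ℕ => ∑' n, cB q n * x ^ n := by
      funext N; exact (iterB hq0 hq1 x N).symm
    rw [heq]; exact tendsto_const_nhds
  have hprod : Tendsto (fun N : ℕ => qpC (q:ℂ) x N * ∑' n, cB q n * ((q:ℂ) ^ N * x) ^ n)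
      atTop (𝓝 (qpiC (q:ℂ) x * 1)) :=
    (tendsto_qpC hq0 hq1 hx).mul hT1
  have h := tendsto_nhds_unique hconst hprod
  rw [mul_one] at h
  exact h.symm

lemma split (hq0 : 0 < q) (hq1 : q < 1) (k : ℕ) :
    qpiC (q:ℂ) (q:ℂ) = qpC (q:ℂ) (q:ℂ) k * qpiC (q:ℂ) ((q:ℂ) ^ (k+1)) := by
  have hq : ‖(q:ℂ)‖ < 1 := by
    rw [Complex.norm_real, Real.norm_of_nonneg hq0.le]; exact hq1
  have hqk : ‖(q:ℂ) ^ (k+1)‖ < 1 := by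
    rw [norm_q_pow hq0]
    exact pow_lt_one₀ hq0.le hq1 k.succ_ne_zero
  have h1 : Tendsto (fun N : ℕ => qpC (q:ℂ) (q:ℂ) (N + k)) atTop (𝓝 (qpiC (q:ℂ) (q:ℂ))) :=
    (tendsto_qpC hq0 hq1 hq).comp (tendsto_add_atTop_nat k)
  have heq : (fun N : ℕ => qpC (q:ℂ) (q:ℂ) (N + k))
      = fun N : ℕ => qpC (q:ℂ) (q:ℂ) k * qpC (q:ℂ) ((q:ℂ) ^ (k+1)) N := by
    funext N
    rw [qpC, qpC, qpC, Nat.add_comm N k, Finset.prod_range_add]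
    congr 1
    apply Finset.prod_congr rfl
    intro i _
    rw [pow_add]
    ring
  rw [heq] at h1
  have h2 : Tendsto (fun N : ℕ => qpC (q:ℂ) (q:ℂ) k * qpC (q:ℂ) ((q:ℂ) ^ (k+1)) N) atTop
      (𝓝 (qpC (q:ℂ) (q:ℂ) k * qpiC (q:ℂ) ((q:ℂ) ^ (k+1)))) :=
    (tendsto_qpC hq0 hq1 hqk).const_mul _
  exact tendsto_nhds_unique h1 h2

end QAux

/-- double-sum term for the main theorem -/
noncomputable def QAux.FF (q : ℝ) (z : ℂ) (k n : ℕ) : ℂ :=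
  (z ^ k / qpC (q:ℂ) (q:ℂ) k) *
    (((-1) ^ n * (q:ℂ) ^ (n*(n+1)/2) / qpC (q:ℂ) (q:ℂ) n) * (q:ℂ) ^ (k*n))

namespace QAux

variable {q : ℝ}

lemma norm_FF (hq0 : 0 < q) (hq1 : q < 1) (z : ℂ) (k n : ℕ) :
    ‖FF q z k n‖ = (‖z‖ ^ k / qpR q q k) * ((q ^ (n*(n+1)/2) / qpR q q n) * q ^ (k*n)) := by
  rw [FF, norm_mul, norm_mul, norm_term hq0 hq1, norm_div, norm_mul, norm_pow, norm_neg,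
    norm_one, one_pow, one_mul, norm_q_pow hq0, norm_q_pow hq0, qpC_eq_real,
    Complex.norm_real, Real.norm_of_nonneg (qpR_q_pos hq0 hq1 n).le]

lemma cB_to_FF (hq0 : 0 < q) (hq1 : q < 1) (z : ℂ) (k n : ℕ) :
    (z ^ k / qpC (q:ℂ) (q:ℂ) k) * (cB q n * ((q:ℂ) ^ (k+1)) ^ n) = FF q z k n := by
  have he : n*(n-1)/2 + (k+1)*n = n*(n+1)/2 + k*n := by
    rw [tri n]; ring
  have h3 : ((q:ℂ)) ^ (n*(n-1)/2) * ((q:ℂ)) ^ ((k+1)*n)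
      = ((q:ℂ)) ^ (n*(n+1)/2) * ((q:ℂ)) ^ (k*n) := by
    rw [← pow_add, ← pow_add, he]
  rw [cB, FF, ← pow_mul]
  linear_combination (z ^ k * (-1:ℂ) ^ n / (qpC (q:ℂ) (q:ℂ) k * qpC (q:ℂ) (q:ℂ) n)) * h3

end QAux

open QAux in
/-- Euler-type identity for `∑ z^k/(q;q)_k^2`. -/
theorem stmt0 (q : ℝ) (hq0 : 0 < q) (hq1 : q < 1) (z : ℂ) (hz : ‖z‖ < 1) :
    ∑' k : ℕ, z ^ k / (qpC q q k) ^ 2 =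
      (1 / qpiC q q) *
        ∑' n : ℕ, ((-1) ^ n * (q : ℂ) ^ (n * (n + 1) / 2) / qpC q q n) *
          (1 / qpiC q ((q : ℂ) ^ n * z)) := by
  have hqn : ‖(q:ℂ)‖ < 1 := by
    rw [Complex.norm_real, Real.norm_of_nonneg hq0.le]; exact hq1
  have hpi : qpiC (q:ℂ) (q:ℂ) ≠ 0 := qpiC_ne hq0 hq1 hqn
  -- summability of the double series
  have hsum2 : Summable fun n : ℕ => q ^ (n*(n+1)/2) / qpR q q n := by
    have h := summable_S3 hq0 hq1 (q := q) (r := q) hq0.le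
    have heq : (fun n : ℕ => q ^ (n*(n-1)/2) * q ^ n / qpR q q n)
        = fun n : ℕ => q ^ (n*(n+1)/2) / qpR q q n := by
      funext n
      rw [← pow_add, ← tri n]
    rwa [heq] at h
  have hFun : Summable (Function.uncurry (FF q z)) := by
    apply Summable.of_norm_bounded
      (g := fun p : ℕ × ℕ => (‖z‖ ^ p.1 / qpR q q p.1) * (q ^ (p.2*(p.2+1)/2) / qpR q q p.2))
    · exact (summable_S1 hq0 hq1 (norm_nonneg z) hz).mul_of_nonneg hsum2
        (fun k => div_nonneg (pow_nonneg (norm_nonneg z) k) (qpR_q_pos hq0 hq1 k).le)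
        (fun n => div_nonneg (pow_nonneg hq0.le _) (qpR_q_pos hq0 hq1 n).le)
    · intro p
      rw [Function.uncurry, norm_FF hq0 hq1]
      have h1 : (q:ℝ) ^ (p.1 * p.2) ≤ 1 := pow_le_one₀ hq0.le hq1.le
      have hb : (q ^ (p.2*(p.2+1)/2) / qpR q q p.2) * q ^ (p.1*p.2)
          ≤ q ^ (p.2*(p.2+1)/2) / qpR q q p.2 :=
        mul_le_of_le_one_right (div_nonneg (pow_nonneg hq0.le _) (qpR_q_pos hq0 hq1 _).le) h1
      exact mul_le_mul_of_nonneg_left hb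
        (div_nonneg (pow_nonneg (norm_nonneg z) _) (qpR_q_pos hq0 hq1 _).le)
  -- rewrite each term of the LHS
  have hkey : ∀ k : ℕ, z ^ k / (qpC (q:ℂ) (q:ℂ) k) ^ 2
      = (1 / qpiC (q:ℂ) (q:ℂ)) * ∑' n, FF q z k n := by
    intro k
    have hqk : ‖(q:ℂ) ^ (k+1)‖ < 1 := by
      rw [norm_q_pow hq0]
      exact pow_lt_one₀ hq0.le hq1 k.succ_ne_zero
    have hB := eulerB hq0 hq1 hqk
    have hne' : qpiC (q:ℂ) ((q:ℂ) ^ (k+1)) ≠ 0 := qpiC_ne hq0 hq1 hqk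
    have hPne := qpC_ne hq0 hq1 k
    have hFsum : (∑' n, FF q z k n)
        = (z ^ k / qpC (q:ℂ) (q:ℂ) k) * qpiC (q:ℂ) ((q:ℂ) ^ (k+1)) := by
      rw [hB, ← tsum_mul_left]
      exact tsum_congr fun n => (cB_to_FF hq0 hq1 z k n).symm
    rw [hFsum, split hq0 hq1 k]
    field_simp
  calc ∑' k : ℕ, z ^ k / (qpC (q:ℂ) (q:ℂ) k) ^ 2
      = ∑' k : ℕ, (1 / qpiC (q:ℂ) (q:ℂ)) * ∑' n, FF q z k n := tsum_congr hkey
    _ = (1 / qpiC (q:ℂ) (q:ℂ)) * ∑' k : ℕ, ∑' n : ℕ, FF q z k n := tsum_mul_left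
    _ = (1 / qpiC (q:ℂ) (q:ℂ)) * ∑' n : ℕ, ∑' k : ℕ, FF q z k n := by
        rw [← Summable.tsum_comm hFun]
    _ = (1 / qpiC (q:ℂ) (q:ℂ)) *
          ∑' n : ℕ, ((-1) ^ n * (q : ℂ) ^ (n * (n + 1) / 2) / qpC (q:ℂ) (q:ℂ) n) *
            (1 / qpiC (q:ℂ) ((q : ℂ) ^ n * z)) := by
        congr 1
        apply tsum_congr
        intro n
        have hwn : ‖(q:ℂ) ^ n * z‖ < 1 := by
          rw [norm_mul, norm_q_pow hq0]
          calc q ^ n * ‖z‖ ≤ 1 * ‖z‖ :=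
                mul_le_mul_of_nonneg_right (pow_le_one₀ hq0.le hq1.le) (norm_nonneg z)
            _ = ‖z‖ := one_mul _
            _ < 1 := hz
        have hA := eulerA' hq0 hq1 hwn
        rw [← hA, ← tsum_mul_left]
        apply tsum_congr
        intro k
        have h2 : ((q:ℂ) ^ n * z) ^ k = (q:ℂ) ^ (k*n) * z ^ k := by
          rw [mul_pow, ← pow_mul, mul_comm n k]
        rw [FF, h2]
        ring
end

section
/- For $0<q<1$, the function $\tau(z) = (z;q)_\infty \sum_{k=0}^\infty \frac{z^k}{(q;q)_k^2}$, initially defined on the open unit disc, admits an analytic continuation to the whole complex plane given by $\tau(z) = \frac{1}{(q;q)_\infty} \sum_{n=0}^\infty \frac{(-1)^n q^{n(n+1)/2}}{(q;q)_n}(z;q)_n$, and this series converges uniformly on every closed disc. -/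
set_option linter.unusedSectionVars false
set_option maxHeartbeats 1000000

open Filter Finset Asymptotics

section Basic
variable {q : ℝ} (hq0 : 0 < q) (hq1 : q < 1)

private lemma weier (a : ℕ → ℝ) (h0 : ∀ i, 0 ≤ a i) (h1 : ∀ i, a i ≤ 1) (n : ℕ) :
    1 - ∑ i ∈ range n, a i ≤ ∏ i ∈ range n, (1 - a i) := by
  induction n with
  | zero => simp
  | succ n ih =>
    rw [Finset.prod_range_succ, Finset.sum_range_succ]
    have h2 : 0 ≤ ∑ i ∈ range n, a i := Finset.sum_nonneg fun i _ => h0 i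
    nlinarith [h0 n, h1 n, Finset.prod_nonneg (fun i (_ : i ∈ range n) => by nlinarith [h0 i, h1 i] : ∀ i ∈ range n, (0:ℝ) ≤ 1 - a i)]

include hq0 hq1

private lemma fac_pos (i : ℕ) : 0 < 1 - q * q ^ i := by
  have h1 : q ^ i ≤ 1 := pow_le_one₀ hq0.le hq1.le
  nlinarith

lemma qpR_pos (n : ℕ) : 0 < qpR q q n :=
  Finset.prod_pos fun i _ => fac_pos hq0 hq1 i

lemma qpR_le_one (n : ℕ) : qpR q q n ≤ 1 :=
  Finset.prod_le_one (fun i _ => (fac_pos hq0 hq1 i).le)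
    (fun i _ => by nlinarith [pow_pos hq0 i])

lemma qpR_succ (n : ℕ) : qpR q q (n + 1) = qpR q q n * (1 - q * q ^ n) :=
  Finset.prod_range_succ _ n

lemma qpR_anti : Antitone (qpR q q) := by
  apply antitone_nat_of_succ_le
  intro n
  rw [qpR_succ hq0 hq1]
  have h := qpR_pos hq0 hq1 n
  nlinarith [mul_pos hq0 (pow_pos hq0 n)]

lemma exists_c0 : ∃ c₀ : ℝ, 0 < c₀ ∧ ∀ n, c₀ ≤ qpR q q n := by
  obtain ⟨M, hM⟩ : ∃ M : ℕ, q * q ^ M / (1 - q) ≤ 1 / 2 := by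
    have h := tendsto_pow_atTop_nhds_zero_of_lt_one hq0.le hq1
    have h2 : Tendsto (fun n : ℕ => q * q ^ n / (1 - q)) atTop (nhds (q * 0 / (1-q))) :=
      (h.const_mul q).div_const (1 - q)
    rw [mul_zero, zero_div] at h2
    exact (h2.eventually_le_const (by norm_num : (0:ℝ) < 1/2)).exists
  have hMpos := qpR_pos hq0 hq1 M
  refine ⟨qpR q q M / 2, by linarith, fun n => ?_⟩
  rcases le_or_gt n M with h | h
  · have := qpR_anti hq0 hq1 h
    linarith
  · obtain ⟨m, rfl⟩ : ∃ m, n = M + m := ⟨n - M, by omega⟩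
    have hsplit : qpR q q (M + m) = qpR q q M * ∏ i ∈ range m, (1 - q * q ^ (M + i)) := by
      rw [qpR, Finset.prod_range_add]; rfl
    have hw : 1 - ∑ i ∈ range m, q * q ^ (M + i) ≤ ∏ i ∈ range m, (1 - q * q ^ (M + i)) :=
      weier _ (fun i => by positivity) (fun i => by nlinarith [fac_pos hq0 hq1 (M + i)]) m
    have hsum : ∑ i ∈ range m, q * q ^ (M + i) ≤ 1 / 2 := by
      have h1 : ∑ i ∈ range m, q * q ^ (M + i) = q * q ^ M * ∑ i ∈ range m, q ^ i := by
        rw [Finset.mul_sum]; congr 1; ext i; rw [pow_add]; ring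
      have h2 : ∑ i ∈ range m, q ^ i ≤ 1 / (1 - q) := by
        rw [one_div]
        calc ∑ i ∈ range m, q ^ i ≤ ∑' i : ℕ, q ^ i :=
              Summable.sum_le_tsum _ (fun i _ => by positivity)
                (summable_geometric_of_lt_one hq0.le hq1)
          _ = (1 - q)⁻¹ := tsum_geometric_of_lt_one hq0.le hq1
      have h3 : q * q ^ M * ∑ i ∈ range m, q ^ i ≤ q * q ^ M * (1 / (1 - q)) := by
        apply mul_le_mul_of_nonneg_left h2 (by positivity)
      rw [h1]
      calc q * q ^ M * ∑ i ∈ range m, q ^ i ≤ q * q ^ M * (1 / (1 - q)) := h3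
        _ = q * q ^ M / (1 - q) := by ring
        _ ≤ 1 / 2 := hM
    have hprod : (1:ℝ)/2 ≤ ∏ i ∈ range m, (1 - q * q ^ (M + i)) := by linarith
    rw [hsplit]
    nlinarith

end Basic

section CBasic
variable {q : ℝ} (hq0 : 0 < q) (hq1 : q < 1)

lemma qpC_cast (n : ℕ) : qpC (q : ℂ) (q : ℂ) n = ((qpR q q n : ℝ) : ℂ) := by
  rw [qpC, qpR]
  push_cast
  rfl

lemma qpC_succ (z : ℂ) (n : ℕ) : qpC q z (n + 1) = qpC q z n * (1 - z * (q:ℂ) ^ n) :=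
  Finset.prod_range_succ _ n

include hq0 hq1

lemma norm_qpC_qq (n : ℕ) : ‖qpC (q : ℂ) (q : ℂ) n‖ = qpR q q n := by
  rw [qpC_cast, Complex.norm_real, Real.norm_of_nonneg (qpR_pos hq0 hq1 n).le]

lemma qpC_qq_ne (n : ℕ) : qpC (q : ℂ) (q : ℂ) n ≠ 0 := by
  rw [qpC_cast]
  exact_mod_cast (qpR_pos hq0 hq1 n).ne'

lemma norm_qpC_le (z : ℂ) {R : ℝ} (hR : ‖z‖ ≤ R) (n : ℕ) :
    ‖qpC (q : ℂ) z n‖ ≤ Real.exp (R / (1 - q)) := by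
  have hR0 : 0 ≤ R := le_trans (norm_nonneg z) hR
  have h1 : ‖qpC (q : ℂ) z n‖ ≤ ∏ i ∈ range n, (1 + R * q ^ i) := by
    rw [qpC]
    refine le_trans (norm_prod_le _ _) (Finset.prod_le_prod (fun i _ => norm_nonneg _) ?_)
    intro i _
    calc ‖1 - z * (q:ℂ) ^ i‖ ≤ ‖(1:ℂ)‖ + ‖z * (q:ℂ) ^ i‖ := norm_sub_le _ _
      _ = 1 + ‖z‖ * q ^ i := by
          rw [norm_one, norm_mul, norm_pow, Complex.norm_real,
            Real.norm_of_nonneg hq0.le]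
      _ ≤ 1 + R * q ^ i := by nlinarith [pow_pos hq0 i]
  have h2 : ∏ i ∈ range n, (1 + R * q ^ i) ≤ Real.exp (R / (1 - q)) := by
    calc ∏ i ∈ range n, (1 + R * q ^ i) ≤ ∏ i ∈ range n, Real.exp (R * q ^ i) := by
          refine Finset.prod_le_prod (fun i _ => by positivity) (fun i _ => ?_)
          have := Real.add_one_le_exp (R * q ^ i)
          linarith
      _ = Real.exp (∑ i ∈ range n, R * q ^ i) := (Real.exp_sum _ _).symm
      _ ≤ Real.exp (R / (1 - q)) := by
          apply Real.exp_le_exp.mpr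
          rw [← Finset.mul_sum]
          calc R * ∑ i ∈ range n, q ^ i ≤ R * (1 - q)⁻¹ := by
                refine mul_le_mul_of_nonneg_left ?_ hR0
                exact le_trans (Summable.sum_le_tsum _ (fun i _ => by positivity)
                  (summable_geometric_of_lt_one hq0.le hq1))
                  (tsum_geometric_of_lt_one hq0.le hq1).le
            _ = R / (1 - q) := by rw [div_eq_mul_inv]
  linarith

lemma mult_qpC (z : ℂ) : Multipliable (fun i : ℕ => 1 - z * (q:ℂ) ^ i) := by
  by_cases hz : ∀ i : ℕ, 1 - z * (q:ℂ) ^ i ≠ 0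
  · apply Complex.multipliable_of_summable_log
    obtain ⟨K, hK⟩ : ∃ K : ℕ, ‖z‖ * q ^ K ≤ 1 / 2 := by
      have h2 : Tendsto (fun n : ℕ => ‖z‖ * q ^ n) atTop (nhds (‖z‖ * 0)) :=
        (tendsto_pow_atTop_nhds_zero_of_lt_one hq0.le hq1).const_mul ‖z‖
      rw [mul_zero] at h2
      exact (h2.eventually_le_const (by norm_num : (0:ℝ) < 1/2)).exists
    rw [← summable_nat_add_iff K]
    apply Summable.of_norm_bounded (g := fun n => 3 / 2 * (‖z‖ * q ^ K * q ^ n))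
      (by apply Summable.mul_left; exact (summable_geometric_of_lt_one hq0.le hq1).mul_left _)
    intro n
    have hnorm : ‖z * (q:ℂ) ^ (n + K)‖ = ‖z‖ * q ^ K * q ^ n := by
      rw [norm_mul, norm_pow, Complex.norm_real, Real.norm_of_nonneg hq0.le, pow_add]
      ring
    have hhalf : ‖-(z * (q:ℂ) ^ (n + K))‖ ≤ 1 / 2 := by
      rw [norm_neg, hnorm]
      calc ‖z‖ * q ^ K * q ^ n ≤ ‖z‖ * q ^ K * 1 :=
            mul_le_mul_of_nonneg_left (pow_le_one₀ hq0.le hq1.le) (by positivity)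
        _ ≤ 1 / 2 := by rw [mul_one]; exact hK
    calc ‖Complex.log (1 - z * (q:ℂ) ^ (n + K))‖
        = ‖Complex.log (1 + -(z * (q:ℂ) ^ (n + K)))‖ := by rw [← sub_eq_add_neg]
      _ ≤ 3 / 2 * ‖-(z * (q:ℂ) ^ (n + K))‖ := Complex.norm_log_one_add_half_le_self hhalf
      _ = 3 / 2 * (‖z‖ * q ^ K * q ^ n) := by rw [norm_neg, hnorm]
  · push_neg at hz
    obtain ⟨j, hj⟩ := hz
    refine ⟨0, ?_⟩
    rw [HasProd]
    apply tendsto_const_nhds.congr'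
    filter_upwards [Filter.eventually_ge_atTop {j}] with s hs
    exact (Finset.prod_eq_zero (hs (Finset.mem_singleton_self j)) hj).symm

lemma tendsto_qpC (z : ℂ) :
    Tendsto (fun N => qpC (q:ℂ) z N) atTop (nhds (qpiC (q:ℂ) z)) :=
  (mult_qpC hq0 hq1 z).hasProd.tendsto_prod_nat

lemma qpiC_split (z : ℂ) (n : ℕ) :
    qpiC (q:ℂ) z = qpC (q:ℂ) z n * qpiC (q:ℂ) (z * (q:ℂ) ^ n) := by
  have h1 : Tendsto (fun m => qpC (q:ℂ) z n * qpC (q:ℂ) (z * (q:ℂ) ^ n) m) atTop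
      (nhds (qpC (q:ℂ) z n * qpiC (q:ℂ) (z * (q:ℂ) ^ n))) :=
    (tendsto_qpC hq0 hq1 _).const_mul _
  have h2 : (fun m => qpC (q:ℂ) z n * qpC (q:ℂ) (z * (q:ℂ) ^ n) m)
      = fun m => qpC (q:ℂ) z (n + m) := by
    funext m
    rw [qpC, qpC, qpC, Finset.prod_range_add]
    refine congrArg _ (Finset.prod_congr rfl fun i _ => ?_)
    rw [pow_add]
    ring
  rw [h2] at h1
  have h3 : Tendsto (fun m => qpC (q:ℂ) z (n + m)) atTop (nhds (qpiC (q:ℂ) z)) := by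
    have := (tendsto_qpC hq0 hq1 z).comp (tendsto_add_atTop_nat n)
    simpa [Function.comp_def, Nat.add_comm] using this
  exact tendsto_nhds_unique h3 h1

lemma qpiC_qq_ne : qpiC (q:ℂ) (q:ℂ) ≠ 0 := by
  obtain ⟨c₀, hc₀, hc⟩ := exists_c0 hq0 hq1
  have hanti : Antitone (qpR q q) := qpR_anti hq0 hq1
  have hbdd : BddBelow (Set.range (qpR q q)) := ⟨c₀, fun x ⟨n, hn⟩ => hn ▸ hc n⟩
  have hlim : Tendsto (qpR q q) atTop (nhds (⨅ n, qpR q q n)) :=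
    tendsto_atTop_ciInf hanti hbdd
  have hlimC : Tendsto (fun n => ((qpR q q n : ℝ) : ℂ)) atTop
      (nhds ((⨅ n, qpR q q n : ℝ) : ℂ)) := by
    exact (Complex.continuous_ofReal.tendsto _).comp hlim
  have heq : (fun n => ((qpR q q n : ℝ) : ℂ)) = fun n => qpC (q:ℂ) (q:ℂ) n := by
    funext n; rw [qpC_cast]
  rw [heq] at hlimC
  have := tendsto_nhds_unique (tendsto_qpC hq0 hq1 (q:ℂ)) hlimC
  rw [this]
  have hpos : 0 < ⨅ n, qpR q q n := lt_of_lt_of_le hc₀ (le_ciInf hc)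
  exact_mod_cast hpos.ne'

end CBasic

noncomputable def eC (q : ℝ) (n : ℕ) : ℂ := (-1) ^ n * (q:ℂ) ^ (n * (n - 1) / 2) / qpC q q n

lemma tri_succ (n : ℕ) : (n + 1) * ((n + 1) - 1) / 2 = n * (n - 1) / 2 + n := by
  have h1 : ∀ m : ℕ, ∑ i ∈ range m, i = m * (m - 1) / 2 := by
    intro m
    rw [Finset.sum_range_id]
  rw [← h1, ← h1, Finset.sum_range_succ]

section Euler
variable {q : ℝ} (hq0 : 0 < q) (hq1 : q < 1)
include hq0 hq1

lemma eC_zero : eC q 0 = 1 := by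
  simp [eC, qpC]

lemma one_sub_qpow_ne (n : ℕ) : (1 : ℂ) - (q:ℂ) * (q:ℂ) ^ n ≠ 0 := by
  have h := fac_pos hq0 hq1 n
  have hcast : ((1 - q * q ^ n : ℝ) : ℂ) = 1 - (q:ℂ) * (q:ℂ) ^ n := by push_cast; ring
  rw [← hcast]
  exact_mod_cast h.ne'

lemma eC_rec (n : ℕ) : eC q (n + 1) * (1 - (q:ℂ) * (q:ℂ) ^ n) = -((q:ℂ) ^ n) * eC q n := by
  have h1 : qpC (q:ℂ) (q:ℂ) n ≠ 0 := qpC_qq_ne hq0 hq1 n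
  have h2 : (1 : ℂ) - (q:ℂ) * (q:ℂ) ^ n ≠ 0 := one_sub_qpow_ne hq0 hq1 n
  rw [eC, eC, qpC_succ, tri_succ, pow_add]
  field_simp
  ring

lemma summable_e_norm (x : ℂ) : Summable (fun n => ‖eC q n * x ^ n‖) := by
  have hkey : ∀ n : ℕ, ‖eC q (n+1) * x ^ (n+1)‖
      = (q ^ n * ‖x‖ / (1 - q * q ^ n)) * ‖eC q n * x ^ n‖ := by
    intro n
    have h2 : (1 : ℂ) - (q:ℂ) * (q:ℂ) ^ n ≠ 0 := one_sub_qpow_ne hq0 hq1 n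
    have he : eC q (n+1) = -((q:ℂ) ^ n) * eC q n / (1 - (q:ℂ) * (q:ℂ) ^ n) := by
      rw [eq_div_iff h2]; exact eC_rec hq0 hq1 n
    rw [he]
    have hnorm : ‖(1:ℂ) - (q:ℂ) * (q:ℂ) ^ n‖ = 1 - q * q ^ n := by
      have : ((1 - q * q ^ n : ℝ) : ℂ) = 1 - (q:ℂ) * (q:ℂ) ^ n := by push_cast; ring
      rw [← this, Complex.norm_real, Real.norm_of_nonneg (fac_pos hq0 hq1 n).le]
    rw [div_mul_eq_mul_div, norm_div, hnorm]
    simp only [norm_mul, norm_neg, norm_pow, Complex.norm_real, Real.norm_of_nonneg hq0.le]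
    ring
  apply summable_of_ratio_norm_eventually_le (r := 1/2) (by norm_num)
  have hev : ∀ᶠ n : ℕ in atTop, q ^ n * ‖x‖ / (1 - q * q ^ n) ≤ 1 / 2 := by
    have htend : Tendsto (fun n : ℕ => q ^ n * ‖x‖ / (1 - q * q ^ n)) atTop
        (nhds (0 * ‖x‖ / (1 - q * 0))) := by
      have hp := tendsto_pow_atTop_nhds_zero_of_lt_one hq0.le hq1
      exact (hp.mul_const ‖x‖).div ((tendsto_const_nhds.sub (hp.const_mul q)).mono_left le_rfl)
        (by norm_num)
    rw [mul_zero, sub_zero, zero_mul, zero_div] at htend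
    exact htend.eventually_le_const (by norm_num)
  filter_upwards [hev] with n hn
  rw [Real.norm_of_nonneg (norm_nonneg _), Real.norm_of_nonneg (norm_nonneg _), hkey n]
  have h0 : 0 ≤ ‖eC q n * x ^ n‖ := norm_nonneg _
  nlinarith

lemma summable_e (x : ℂ) : Summable (fun n => eC q n * x ^ n) :=
  (summable_e_norm hq0 hq1 x).of_norm

lemma euler_funceq (y : ℂ) :
    ∑' n, eC q n * y ^ n = (1 - y) * ∑' n, eC q n * ((q:ℂ) * y) ^ n := by
  have hsy := summable_e hq0 hq1 y
  have hsqy := summable_e hq0 hq1 ((q:ℂ) * y)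
  have hshift : Summable (fun n => eC q (n+1) * ((q:ℂ) * y) ^ (n+1)) :=
    (summable_nat_add_iff 1).2 hsqy
  have hmul : Summable (fun n => y * (eC q n * ((q:ℂ) * y) ^ n)) := hsqy.mul_left y
  have h0 : eC q 0 * ((q:ℂ) * y) ^ 0 = 1 := by rw [eC_zero hq0 hq1]; ring
  have h0' : eC q 0 * y ^ 0 = 1 := by rw [eC_zero hq0 hq1]; ring
  calc ∑' n, eC q n * y ^ n = 1 + ∑' n, eC q (n+1) * y ^ (n+1) := by
        rw [Summable.tsum_eq_zero_add hsy, h0']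
    _ = 1 + ∑' n, (eC q (n+1) * ((q:ℂ) * y) ^ (n+1) - y * (eC q n * ((q:ℂ) * y) ^ n)) := by
        congr 1
        refine tsum_congr fun n => ?_
        have hrec := eC_rec hq0 hq1 n
        linear_combination (y ^ (n+1)) * hrec
    _ = 1 + (∑' n, eC q (n+1) * ((q:ℂ) * y) ^ (n+1) - ∑' n, y * (eC q n * ((q:ℂ) * y) ^ n)) := by
        rw [Summable.tsum_sub hshift hmul]
    _ = (1 + ∑' n, eC q (n+1) * ((q:ℂ) * y) ^ (n+1)) - y * ∑' n, eC q n * ((q:ℂ) * y) ^ n := by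
        rw [tsum_mul_left]; ring
    _ = (1 - y) * ∑' n, eC q n * ((q:ℂ) * y) ^ n := by
        have hd : ∑' n, eC q n * ((q:ℂ) * y) ^ n
            = 1 + ∑' n, eC q (n+1) * ((q:ℂ) * y) ^ (n+1) := by
          rw [Summable.tsum_eq_zero_add hsqy, h0]
        rw [hd]; ring

lemma euler_iterate (x : ℂ) (N : ℕ) :
    ∑' n, eC q n * x ^ n = qpC (q:ℂ) x N * ∑' n, eC q n * ((q:ℂ) ^ N * x) ^ n := by
  induction N with
  | zero => simp [qpC]
  | succ N ih =>
    rw [ih, euler_funceq hq0 hq1 ((q:ℂ) ^ N * x), qpC_succ]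
    have : (q:ℂ) * ((q:ℂ) ^ N * x) = (q:ℂ) ^ (N+1) * x := by ring
    rw [this]
    ring

lemma euler1 (x : ℂ) : ∑' n, eC q n * x ^ n = qpiC (q:ℂ) x := by
  set C : ℝ := ∑' n, ‖eC q (n+1) * x ^ (n+1)‖ with hC
  have hCsum : Summable (fun n => ‖eC q (n+1) * x ^ (n+1)‖) :=
    (summable_nat_add_iff 1).2 (summable_e_norm hq0 hq1 x)
  have hlim : Tendsto (fun N => ∑' n, eC q n * ((q:ℂ) ^ N * x) ^ n) atTop (nhds 1) := by
    rw [tendsto_iff_norm_sub_tendsto_zero]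
    apply squeeze_zero (fun N => norm_nonneg _) (g := fun N => q ^ N * C)
    · intro N
      have hdecomp : ∑' n, eC q n * ((q:ℂ) ^ N * x) ^ n
          = 1 + ∑' n, eC q (n+1) * ((q:ℂ) ^ N * x) ^ (n+1) := by
        rw [Summable.tsum_eq_zero_add (summable_e hq0 hq1 _)]
        congr 1
        rw [eC_zero hq0 hq1]; ring
      rw [hdecomp, add_sub_cancel_left]
      have hterm : ∀ n : ℕ, ‖eC q (n+1) * ((q:ℂ) ^ N * x) ^ (n+1)‖
          ≤ q ^ N * ‖eC q (n+1) * x ^ (n+1)‖ := by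
        intro n
        have heq : eC q (n+1) * ((q:ℂ) ^ N * x) ^ (n+1)
            = ((q:ℂ) ^ N) ^ (n+1) * (eC q (n+1) * x ^ (n+1)) := by ring
        rw [heq, norm_mul, norm_pow, norm_pow, Complex.norm_real,
          Real.norm_of_nonneg hq0.le]
        have h1 : (q ^ N) ^ (n+1) ≤ q ^ N := by
          calc (q ^ N) ^ (n+1) ≤ (q ^ N) ^ 1 :=
                pow_le_pow_of_le_one (by positivity) (pow_le_one₀ hq0.le hq1.le) (by omega)
            _ = q ^ N := pow_one _
        exact mul_le_mul_of_nonneg_right h1 (norm_nonneg _)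
      calc ‖∑' n, eC q (n+1) * ((q:ℂ) ^ N * x) ^ (n+1)‖
          ≤ ∑' n, ‖eC q (n+1) * ((q:ℂ) ^ N * x) ^ (n+1)‖ :=
            norm_tsum_le_tsum_norm ((summable_nat_add_iff 1).2
              (summable_e_norm hq0 hq1 ((q:ℂ) ^ N * x)))
        _ ≤ ∑' n, q ^ N * ‖eC q (n+1) * x ^ (n+1)‖ :=
            Summable.tsum_le_tsum hterm ((summable_nat_add_iff 1).2
              (summable_e_norm hq0 hq1 ((q:ℂ) ^ N * x))) (hCsum.mul_left _)
        _ = q ^ N * C := tsum_mul_left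
    · have := (tendsto_pow_atTop_nhds_zero_of_lt_one hq0.le hq1).mul_const C
      rwa [zero_mul] at this
  have h1 : Tendsto (fun N => qpC (q:ℂ) x N * ∑' n, eC q n * ((q:ℂ) ^ N * x) ^ n) atTop
      (nhds (qpiC (q:ℂ) x * 1)) := (tendsto_qpC hq0 hq1 x).mul hlim
  have h2 : (fun N => qpC (q:ℂ) x N * ∑' n, eC q n * ((q:ℂ) ^ N * x) ^ n)
      = fun _ => ∑' n, eC q n * x ^ n := by
    funext N; exact (euler_iterate hq0 hq1 x N).symm
  rw [h2] at h1
  have := tendsto_nhds_unique h1 tendsto_const_nhds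
  rw [← this, mul_one]

end Euler

section Euler2
variable {q : ℝ} (hq0 : 0 < q) (hq1 : q < 1)
include hq0 hq1

lemma norm_div_qpC (x : ℂ) (k : ℕ) :
    ‖x ^ k / qpC (q:ℂ) (q:ℂ) k‖ = ‖x‖ ^ k / qpR q q k := by
  rw [norm_div, norm_pow, norm_qpC_qq hq0 hq1]

lemma summable_G_norm {x : ℂ} (hx : ‖x‖ < 1) :
    Summable (fun k => ‖x ^ k / qpC (q:ℂ) (q:ℂ) k‖) := by
  obtain ⟨c₀, hc₀, hc⟩ := exists_c0 hq0 hq1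
  apply Summable.of_nonneg_of_le (fun k => norm_nonneg _)
    (f := fun k => c₀⁻¹ * ‖x‖ ^ k)
  · intro k
    rw [norm_div_qpC hq0 hq1]
    rw [div_le_iff₀ (qpR_pos hq0 hq1 k)]
    calc ‖x‖ ^ k = c₀⁻¹ * ‖x‖ ^ k * c₀ := by field_simp
      _ ≤ c₀⁻¹ * ‖x‖ ^ k * qpR q q k := by
          apply mul_le_mul_of_nonneg_left (hc k) (by positivity)
  · exact (summable_geometric_of_lt_one (norm_nonneg x) hx).mul_left _

lemma summable_G {x : ℂ} (hx : ‖x‖ < 1) :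
    Summable (fun k => x ^ k / qpC (q:ℂ) (q:ℂ) k) :=
  (summable_G_norm hq0 hq1 hx).of_norm

lemma euler2_funceq {y : ℂ} (hy : ‖y‖ < 1) :
    ∑' k, ((q:ℂ) * y) ^ k / qpC (q:ℂ) (q:ℂ) k
      = (1 - y) * ∑' k, y ^ k / qpC (q:ℂ) (q:ℂ) k := by
  have hqy : ‖(q:ℂ) * y‖ < 1 := by
    rw [norm_mul, Complex.norm_real, Real.norm_of_nonneg hq0.le]
    nlinarith [norm_nonneg y]
  have hsy := summable_G hq0 hq1 hy
  have hsqy := summable_G hq0 hq1 hqy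
  have hshift : Summable (fun k => y ^ (k+1) / qpC (q:ℂ) (q:ℂ) (k+1)) :=
    (summable_nat_add_iff 1).2 hsy
  have hmul : Summable (fun k => y * (y ^ k / qpC (q:ℂ) (q:ℂ) k)) := hsy.mul_left y
  have h0 : ((q:ℂ) * y) ^ 0 / qpC (q:ℂ) (q:ℂ) 0 = 1 := by simp [qpC]
  have h0' : (y:ℂ) ^ 0 / qpC (q:ℂ) (q:ℂ) 0 = 1 := by simp [qpC]
  calc ∑' k, ((q:ℂ) * y) ^ k / qpC (q:ℂ) (q:ℂ) k
      = 1 + ∑' k, ((q:ℂ) * y) ^ (k+1) / qpC (q:ℂ) (q:ℂ) (k+1) := by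
        rw [Summable.tsum_eq_zero_add hsqy, h0]
    _ = 1 + ∑' k, (y ^ (k+1) / qpC (q:ℂ) (q:ℂ) (k+1) - y * (y ^ k / qpC (q:ℂ) (q:ℂ) k)) := by
        congr 1
        refine tsum_congr fun k => ?_
        have hD : qpC (q:ℂ) (q:ℂ) k ≠ 0 := qpC_qq_ne hq0 hq1 k
        have hD' : qpC (q:ℂ) (q:ℂ) (k+1) ≠ 0 := qpC_qq_ne hq0 hq1 (k+1)
        have hsucc : qpC (q:ℂ) (q:ℂ) (k+1) = qpC (q:ℂ) (q:ℂ) k * (1 - (q:ℂ) * (q:ℂ) ^ k) :=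
          qpC_succ _ k
        rw [hsucc] at hD' ⊢
        have hf : (1:ℂ) - (q:ℂ) * (q:ℂ) ^ k ≠ 0 := one_sub_qpow_ne hq0 hq1 k
        field_simp
        ring
    _ = 1 + (∑' k, y ^ (k+1) / qpC (q:ℂ) (q:ℂ) (k+1)
          - ∑' k, y * (y ^ k / qpC (q:ℂ) (q:ℂ) k)) := by
        rw [Summable.tsum_sub hshift hmul]
    _ = (1 + ∑' k, y ^ (k+1) / qpC (q:ℂ) (q:ℂ) (k+1))
          - y * ∑' k, y ^ k / qpC (q:ℂ) (q:ℂ) k := by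
        rw [tsum_mul_left]; ring
    _ = (1 - y) * ∑' k, y ^ k / qpC (q:ℂ) (q:ℂ) k := by
        have hd : ∑' k, y ^ k / qpC (q:ℂ) (q:ℂ) k
            = 1 + ∑' k, y ^ (k+1) / qpC (q:ℂ) (q:ℂ) (k+1) := by
          rw [Summable.tsum_eq_zero_add hsy, h0']
        rw [hd]; ring

lemma norm_pow_mul_lt {x : ℂ} (hx : ‖x‖ < 1) (N : ℕ) : ‖(q:ℂ) ^ N * x‖ < 1 := by
  rw [norm_mul, norm_pow, Complex.norm_real, Real.norm_of_nonneg hq0.le]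
  have h1 : q ^ N ≤ 1 := pow_le_one₀ hq0.le hq1.le
  nlinarith [norm_nonneg x, pow_pos hq0 N]

lemma euler2_iterate {x : ℂ} (hx : ‖x‖ < 1) (N : ℕ) :
    ∑' k, ((q:ℂ) ^ N * x) ^ k / qpC (q:ℂ) (q:ℂ) k
      = qpC (q:ℂ) x N * ∑' k, x ^ k / qpC (q:ℂ) (q:ℂ) k := by
  induction N with
  | zero => simp [qpC]
  | succ N ih =>
    have heq : ((q:ℂ) ^ (N+1) * x) = (q:ℂ) * ((q:ℂ) ^ N * x) := by ring
    rw [heq, euler2_funceq hq0 hq1 (norm_pow_mul_lt hq0 hq1 hx N), ih, qpC_succ]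
    ring

lemma euler2 {x : ℂ} (hx : ‖x‖ < 1) :
    qpiC (q:ℂ) x * ∑' k, x ^ k / qpC (q:ℂ) (q:ℂ) k = 1 := by
  set C : ℝ := ∑' k, ‖x ^ (k+1) / qpC (q:ℂ) (q:ℂ) (k+1)‖ with hC
  have hCsum : Summable (fun k => ‖x ^ (k+1) / qpC (q:ℂ) (q:ℂ) (k+1)‖) :=
    (summable_nat_add_iff 1).2 (summable_G_norm hq0 hq1 hx)
  have hlim : Tendsto (fun N => ∑' k, ((q:ℂ) ^ N * x) ^ k / qpC (q:ℂ) (q:ℂ) k) atTop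
      (nhds 1) := by
    rw [tendsto_iff_norm_sub_tendsto_zero]
    apply squeeze_zero (fun N => norm_nonneg _) (g := fun N => q ^ N * C)
    · intro N
      have hxN := norm_pow_mul_lt hq0 hq1 hx N
      have hdecomp : ∑' k, ((q:ℂ) ^ N * x) ^ k / qpC (q:ℂ) (q:ℂ) k
          = 1 + ∑' k, ((q:ℂ) ^ N * x) ^ (k+1) / qpC (q:ℂ) (q:ℂ) (k+1) := by
        rw [Summable.tsum_eq_zero_add (summable_G hq0 hq1 hxN)]
        congr 1
        simp [qpC]
      rw [hdecomp, add_sub_cancel_left]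
      have hterm : ∀ k : ℕ, ‖((q:ℂ) ^ N * x) ^ (k+1) / qpC (q:ℂ) (q:ℂ) (k+1)‖
          ≤ q ^ N * ‖x ^ (k+1) / qpC (q:ℂ) (q:ℂ) (k+1)‖ := by
        intro k
        have heq : ((q:ℂ) ^ N * x) ^ (k+1) / qpC (q:ℂ) (q:ℂ) (k+1)
            = ((q:ℂ) ^ N) ^ (k+1) * (x ^ (k+1) / qpC (q:ℂ) (q:ℂ) (k+1)) := by ring
        rw [heq, norm_mul, norm_pow, norm_pow, Complex.norm_real,
          Real.norm_of_nonneg hq0.le]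
        have h1 : (q ^ N) ^ (k+1) ≤ q ^ N := by
          calc (q ^ N) ^ (k+1) ≤ (q ^ N) ^ 1 :=
                pow_le_pow_of_le_one (by positivity) (pow_le_one₀ hq0.le hq1.le) (by omega)
            _ = q ^ N := pow_one _
        exact mul_le_mul_of_nonneg_right h1 (norm_nonneg _)
      calc ‖∑' k, ((q:ℂ) ^ N * x) ^ (k+1) / qpC (q:ℂ) (q:ℂ) (k+1)‖
          ≤ ∑' k, ‖((q:ℂ) ^ N * x) ^ (k+1) / qpC (q:ℂ) (q:ℂ) (k+1)‖ :=
            norm_tsum_le_tsum_norm ((summable_nat_add_iff 1).2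
              (summable_G_norm hq0 hq1 hxN))
        _ ≤ ∑' k, q ^ N * ‖x ^ (k+1) / qpC (q:ℂ) (q:ℂ) (k+1)‖ :=
            Summable.tsum_le_tsum hterm ((summable_nat_add_iff 1).2
              (summable_G_norm hq0 hq1 hxN)) (hCsum.mul_left _)
        _ = q ^ N * C := tsum_mul_left
    · have := (tendsto_pow_atTop_nhds_zero_of_lt_one hq0.le hq1).mul_const C
      rwa [zero_mul] at this
  have h1 : Tendsto (fun N => qpC (q:ℂ) x N * ∑' k, x ^ k / qpC (q:ℂ) (q:ℂ) k) atTop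
      (nhds (qpiC (q:ℂ) x * ∑' k, x ^ k / qpC (q:ℂ) (q:ℂ) k)) :=
    (tendsto_qpC hq0 hq1 x).mul_const _
  have h2 : (fun N => qpC (q:ℂ) x N * ∑' k, x ^ k / qpC (q:ℂ) (q:ℂ) k)
      = fun N => ∑' k, ((q:ℂ) ^ N * x) ^ k / qpC (q:ℂ) (q:ℂ) k := by
    funext N; exact (euler2_iterate hq0 hq1 hx N).symm
  rw [h2] at h1
  exact tendsto_nhds_unique h1 hlim

end Euler2

/-- the function τ extends to an entire function. -/
theorem stmt1 (q : ℝ) (hq0 : 0 < q) (hq1 : q < 1) :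
    ∃ τ : ℂ → ℂ, Differentiable ℂ τ ∧
      (∀ z : ℂ, ‖z‖ < 1 → τ z = qpiC q z * ∑' k : ℕ, z ^ k / (qpC q q k) ^ 2) ∧
      (∀ z : ℂ, τ z =
        (1 / qpiC q q) *
          ∑' n : ℕ, ((-1) ^ n * (q : ℂ) ^ (n * (n + 1) / 2) / qpC q q n) * qpC q z n) ∧
      (∀ R : ℝ, 0 < R → TendstoUniformlyOn
        (fun N z => ∑ n ∈ Finset.range N,
          ((-1) ^ n * (q : ℂ) ^ (n * (n + 1) / 2) / qpC q q n) * qpC q z n)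
        (fun z => qpiC q q * τ z) Filter.atTop (Metric.closedBall 0 R)) := by
  obtain ⟨c₀, hc₀, hc⟩ := exists_c0 hq0 hq1
  have hQne : qpiC (q:ℂ) (q:ℂ) ≠ 0 := qpiC_qq_ne hq0 hq1
  set Q : ℂ := qpiC (q:ℂ) (q:ℂ) with hQ
  set c : ℕ → ℂ := fun n => (-1) ^ n * (q : ℂ) ^ (n * (n + 1) / 2) / qpC (q:ℂ) (q:ℂ) n
    with hc_def
  set τ : ℂ → ℂ := fun z => (1/Q) * ∑' n, c n * qpC (q:ℂ) z n with hτ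
  -- norm bound on coefficients
  have hTn : ∀ n : ℕ, n ≤ n * (n + 1) / 2 := by
    intro n
    cases n with
    | zero => simp
    | succ m =>
      rw [Nat.le_div_iff_mul_le (by norm_num)]
      have : 2 ≤ m + 1 + 1 := by omega
      calc (m+1) * 2 ≤ (m+1) * (m+1+1) := Nat.mul_le_mul_left _ this
        _ = (m+1) * ((m+1) + 1) := rfl
  have hcn : ∀ n : ℕ, ‖c n‖ ≤ q ^ n / c₀ := by
    intro n
    rw [hc_def]
    simp only []
    rw [norm_div, norm_mul, norm_pow, norm_pow, norm_neg, norm_one, one_pow, one_mul,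
      Complex.norm_real, Real.norm_of_nonneg hq0.le, norm_qpC_qq hq0 hq1]
    exact div_le_div₀ (by positivity)
      (pow_le_pow_of_le_one hq0.le hq1.le (hTn n)) hc₀ (hc n)
  have hbound : ∀ (R : ℝ), 0 ≤ R → ∀ (n : ℕ) (z : ℂ), ‖z‖ ≤ R →
      ‖c n * qpC (q:ℂ) z n‖ ≤ (Real.exp (R / (1 - q)) / c₀) * q ^ n := by
    intro R hR n z hz
    rw [norm_mul]
    calc ‖c n‖ * ‖qpC (q:ℂ) z n‖ ≤ (q ^ n / c₀) * Real.exp (R / (1 - q)) :=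
          mul_le_mul (hcn n) (norm_qpC_le hq0 hq1 z hz n) (norm_nonneg _) (by positivity)
      _ = (Real.exp (R / (1 - q)) / c₀) * q ^ n := by ring
  have husum : ∀ R : ℝ, Summable (fun n => (Real.exp (R / (1 - q)) / c₀) * q ^ n) :=
    fun R => (summable_geometric_of_lt_one hq0.le hq1).mul_left _
  refine ⟨τ, ?_, ?_, ?_, ?_⟩
  · -- differentiable
    have hg : Differentiable ℂ (fun z => ∑' n, c n * qpC (q:ℂ) z n) := by
      intro z₀
      have hz₀ : z₀ ∈ Metric.ball (0:ℂ) (‖z₀‖ + 1) := by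
        simp [Metric.mem_ball, dist_zero_right]
      have hd : DifferentiableOn ℂ (fun z => ∑' n, c n * qpC (q:ℂ) z n)
          (Metric.ball 0 (‖z₀‖ + 1)) := by
        apply Complex.differentiableOn_tsum_of_summable_norm (husum (‖z₀‖ + 1))
        · intro n
          apply Differentiable.differentiableOn
          apply Differentiable.const_mul
          show Differentiable ℂ fun z => ∏ i ∈ Finset.range n, (1 - z * (q:ℂ) ^ i)
          apply Differentiable.fun_finsetProd
          intro i _
          exact (differentiable_const (1:ℂ)).sub (differentiable_id.mul_const _)
        · exact Metric.isOpen_ball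
        · intro n w hw
          have : ‖w‖ ≤ ‖z₀‖ + 1 := by
            rw [Metric.mem_ball, dist_zero_right] at hw
            linarith
          exact hbound _ (by positivity) n w this
      exact hd.differentiableAt (Metric.isOpen_ball.mem_nhds hz₀)
    exact fun z => ((hg z).const_mul _ : _)
  · -- identity on unit disc
    intro z hz
    have hznorm : ∀ n : ℕ, ‖z * (q:ℂ) ^ n‖ < 1 := by
      intro n
      rw [norm_mul, norm_pow, Complex.norm_real, Real.norm_of_nonneg hq0.le]
      have h1 : q ^ n ≤ 1 := pow_le_one₀ hq0.le hq1.le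
      nlinarith [norm_nonneg z, pow_pos hq0 n]
    have key_n : ∀ n : ℕ, qpC (q:ℂ) z n
        = qpiC (q:ℂ) z * ∑' k, (z * (q:ℂ) ^ n) ^ k / qpC (q:ℂ) (q:ℂ) k := by
      intro n
      have hs := qpiC_split hq0 hq1 z n
      have he2 := euler2 hq0 hq1 (hznorm n)
      rw [hs, mul_assoc, he2, mul_one]
    have hF : Summable (Function.uncurry fun n k =>
        c n * ((z * (q:ℂ) ^ n) ^ k / qpC (q:ℂ) (q:ℂ) k)) := by
      apply Summable.of_norm_bounded (g := fun p : ℕ × ℕ => (q ^ p.1 / c₀) * (‖z‖ ^ p.2 / c₀))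
      · exact Summable.mul_of_nonneg
          ((summable_geometric_of_lt_one hq0.le hq1).div_const _)
          ((summable_geometric_of_lt_one (norm_nonneg z) hz).div_const _)
          (fun n => by positivity) (fun k => by positivity)
      · rintro ⟨n, k⟩
        simp only [Function.uncurry]
        rw [norm_mul]
        apply mul_le_mul (hcn n) ?_ (norm_nonneg _) (by positivity)
        rw [norm_div, norm_pow, norm_qpC_qq hq0 hq1]
        apply div_le_div₀ (by positivity) ?_ hc₀ (hc k)
        apply pow_le_pow_left₀ (norm_nonneg _)
        calc ‖z * (q:ℂ) ^ n‖ ≤ ‖z‖ * ‖(q:ℂ) ^ n‖ := norm_mul_le _ _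
          _ ≤ ‖z‖ * 1 := by
              apply mul_le_mul_of_nonneg_left ?_ (norm_nonneg z)
              rw [norm_pow, Complex.norm_real, Real.norm_of_nonneg hq0.le]
              exact pow_le_one₀ hq0.le hq1.le
          _ = ‖z‖ := mul_one _
    have hpt : ∀ n k : ℕ, c n * ((z * (q:ℂ) ^ n) ^ k / qpC (q:ℂ) (q:ℂ) k)
        = (z ^ k / qpC (q:ℂ) (q:ℂ) k) * (eC q n * ((q:ℂ) ^ (k+1)) ^ n) := by
      intro n k
      have hT : n * (n + 1) / 2 = n * (n - 1) / 2 + n := by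
        have h := tri_succ n
        rwa [Nat.add_sub_cancel, mul_comm (n+1) n] at h
      have hq1' : (q:ℂ) ^ (n * (n + 1) / 2) = (q:ℂ) ^ (n * (n - 1) / 2) * (q:ℂ) ^ n := by
        rw [← pow_add, hT]
      have hq2 : ((q:ℂ) ^ (k+1)) ^ n = (q:ℂ) ^ (n * k) * (q:ℂ) ^ n := by
        rw [← pow_mul, ← pow_add]
        congr 1
        ring
      have hq3 : (z * (q:ℂ) ^ n) ^ k = z ^ k * (q:ℂ) ^ (n * k) := by
        rw [mul_pow, ← pow_mul]
      rw [hc_def]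
      simp only [eC]
      rw [hq1', hq2, hq3]
      have h1 : qpC (q:ℂ) (q:ℂ) n ≠ 0 := qpC_qq_ne hq0 hq1 n
      have h2 : qpC (q:ℂ) (q:ℂ) k ≠ 0 := qpC_qq_ne hq0 hq1 k
      field_simp
    have hinner : ∀ k : ℕ, ∑' n, c n * ((z * (q:ℂ) ^ n) ^ k / qpC (q:ℂ) (q:ℂ) k)
        = Q * (z ^ k / (qpC (q:ℂ) (q:ℂ) k) ^ 2) := by
      intro k
      have : ∀ n : ℕ, c n * ((z * (q:ℂ) ^ n) ^ k / qpC (q:ℂ) (q:ℂ) k)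
          = (z ^ k / qpC (q:ℂ) (q:ℂ) k) * (eC q n * ((q:ℂ) ^ (k+1)) ^ n) := fun n => hpt n k
      rw [tsum_congr this, tsum_mul_left, euler1 hq0 hq1]
      have hsplitq := qpiC_split hq0 hq1 (q:ℂ) k
      have hpow : (q:ℂ) * (q:ℂ) ^ k = (q:ℂ) ^ (k+1) := by
        rw [pow_succ]
        ring
      rw [hpow] at hsplitq
      have hX : qpiC (q:ℂ) ((q:ℂ) ^ (k+1)) = Q / qpC (q:ℂ) (q:ℂ) k := by
        rw [eq_div_iff (qpC_qq_ne hq0 hq1 k), mul_comm, hQ, hsplitq]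
      rw [hX, pow_two]
      have h2 : qpC (q:ℂ) (q:ℂ) k ≠ 0 := qpC_qq_ne hq0 hq1 k
      field_simp
    have hmain : ∑' n, c n * qpC (q:ℂ) z n
        = qpiC (q:ℂ) z * (Q * ∑' k, z ^ k / (qpC (q:ℂ) (q:ℂ) k) ^ 2) := by
      calc ∑' n, c n * qpC (q:ℂ) z n
          = ∑' n, qpiC (q:ℂ) z *
              (c n * ∑' k, (z * (q:ℂ) ^ n) ^ k / qpC (q:ℂ) (q:ℂ) k) := by
            refine tsum_congr fun n => ?_
            rw [key_n n]
            ring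
        _ = qpiC (q:ℂ) z * ∑' n, (c n * ∑' k, (z * (q:ℂ) ^ n) ^ k / qpC (q:ℂ) (q:ℂ) k) :=
            tsum_mul_left
        _ = qpiC (q:ℂ) z * ∑' n, ∑' k, c n * ((z * (q:ℂ) ^ n) ^ k / qpC (q:ℂ) (q:ℂ) k) := by
            congr 1
            exact tsum_congr fun n => (tsum_mul_left).symm
        _ = qpiC (q:ℂ) z * ∑' k, ∑' n, c n * ((z * (q:ℂ) ^ n) ^ k / qpC (q:ℂ) (q:ℂ) k) := by
            congr 1
            exact (Summable.tsum_comm hF).symm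
        _ = qpiC (q:ℂ) z * ∑' k, Q * (z ^ k / (qpC (q:ℂ) (q:ℂ) k) ^ 2) := by
            congr 1
            exact tsum_congr hinner
        _ = qpiC (q:ℂ) z * (Q * ∑' k, z ^ k / (qpC (q:ℂ) (q:ℂ) k) ^ 2) := by
            rw [tsum_mul_left]
    rw [hτ]
    simp only []
    rw [hmain]
    field_simp
  · -- definition
    intro z
    rfl
  · -- uniform convergence
    intro R hR
    have h := tendstoUniformlyOn_tsum_nat (husum R)
      (f := fun n z => c n * qpC (q:ℂ) z n) (s := Metric.closedBall 0 R) ?_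
    · have hfun : (fun z : ℂ => ∑' n, c n * qpC (q:ℂ) z n) = fun z => Q * τ z := by
        funext z
        rw [hτ]
        simp only []
        field_simp
      rw [hfun] at h
      exact h
    · intro n z hz
      rw [Metric.mem_closedBall, dist_zero_right] at hz
      exact hbound R hR.le n z hz
end

section
/- Let $0<q<1$ and let $g$ be analytic on the closed disc $\{|z|\leq R\}$ for some $R>1$. Then for every $\lambda$ with $0 < \lambda < (\ln R)/\ln(1/q)$, there is a constant $C>0$ such that the divided differences satisfy $|g[1;q;\ldots;q^k]| \leq C q^{\lambda k}$ for all $k\geq 0$. -/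
open Filter Finset Asymptotics

open MeasureTheory Metric Complex Polynomial in
/-- Finite sums commute with circle integrals. -/
lemma my_circleIntegral_finset_sum {ι : Type*} (s : Finset ι) (f : ι → ℂ → ℂ) (c : ℂ) (R : ℝ)
    (h : ∀ i ∈ s, CircleIntegrable (f i) c R) :
    (∮ z in C(c, R), ∑ i ∈ s, f i z) = ∑ i ∈ s, ∮ z in C(c, R), f i z := by
  simp only [circleIntegral, smul_sum]
  exact intervalIntegral.integral_finset_sum fun i hi => (h i hi).out

open Polynomial in
/-- Partial fraction decomposition of `(∏ (z - v i))⁻¹`. -/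
lemma my_partial_fractions {F : Type*} [Field F] {ι : Type*} [DecidableEq ι] (s : Finset ι)
    (v : ι → F) (hvs : Set.InjOn v s) (hs : s.Nonempty) (z : F) (hz : ∀ i ∈ s, z - v i ≠ 0) :
    (∏ i ∈ s, (z - v i))⁻¹
      = ∑ j ∈ s, (∏ i ∈ s.erase j, (v j - v i))⁻¹ * (z - v j)⁻¹ := by
  have h1 : (∑ j ∈ s, Lagrange.basis s v j).eval z = 1 := by
    rw [Lagrange.sum_basis hvs hs, eval_one]
  have h2 : ∀ j ∈ s,
      (Lagrange.basis s v j).eval z = ∏ i ∈ s.erase j, ((v j - v i)⁻¹ * (z - v i)) := by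
    intro j _
    simp [Lagrange.basis, Lagrange.basisDivisor, eval_prod]
  rw [eval_finset_sum] at h1
  have key : ∀ j ∈ s,
      (∏ i ∈ s.erase j, ((v j - v i)⁻¹ * (z - v i))) * (∏ i ∈ s, (z - v i))⁻¹
        = (∏ i ∈ s.erase j, (v j - v i))⁻¹ * (z - v j)⁻¹ := by
    intro j hj
    have hne : (∏ i ∈ s.erase j, (z - v i)) ≠ 0 :=
      Finset.prod_ne_zero_iff.2 fun i hi => hz i (Finset.mem_of_mem_erase hi)
    rw [Finset.prod_mul_distrib, Finset.prod_inv_distrib, ← Finset.mul_prod_erase s _ hj,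
      mul_inv, mul_mul_mul_comm, mul_inv_cancel₀ hne, mul_one]
  calc (∏ i ∈ s, (z - v i))⁻¹
      = (∑ j ∈ s, (Lagrange.basis s v j).eval z) * (∏ i ∈ s, (z - v i))⁻¹ := by
        rw [h1, one_mul]
    _ = ∑ j ∈ s, (∏ i ∈ s.erase j, (v j - v i))⁻¹ * (z - v j)⁻¹ := by
        rw [Finset.sum_mul]
        exact Finset.sum_congr rfl fun j hj => by rw [h2 j hj, key j hj]


/-- Termwise lower bound: `exp (-(a/(R-1))) ≤ 1 - a/R` for `0 < a ≤ 1 < R`. -/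
lemma my_term_lb {R a : ℝ} (hR : 1 < R) (ha0 : 0 < a) (ha1 : a ≤ 1) :
    Real.exp (-(a / (R - 1))) ≤ 1 - a / R := by
  have hR0 : (0 : ℝ) < R := lt_trans one_pos hR
  have hRa : 0 < R - a := by linarith
  have h1 : R / (R - a) ≤ 1 + a / (R - 1) := by
    rw [div_le_iff₀ hRa, add_mul, one_mul, div_mul_eq_mul_div]
    have key : a ≤ a * (R - a) / (R - 1) := by
      rw [le_div_iff₀ (by linarith : (0:ℝ) < R - 1)]
      nlinarith
    linarith
  have h2 : R / (R - a) ≤ Real.exp (a / (R - 1)) :=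
    le_trans h1 (by linarith [Real.add_one_le_exp (a / (R - 1))])
  have h3 : (Real.exp (a / (R - 1)))⁻¹ ≤ (R / (R - a))⁻¹ :=
    inv_anti₀ (div_pos hR0 hRa) h2
  rw [← Real.exp_neg] at h3
  calc Real.exp (-(a / (R - 1))) ≤ (R / (R - a))⁻¹ := h3
    _ = 1 - a / R := by field_simp

/-- Lower bound for the product `∏ (R - q^i)`. -/
lemma my_prod_lb {q R : ℝ} (hq0 : 0 < q) (hq1 : q < 1) (hR : 1 < R) (n : ℕ) :
    Real.exp (-(1 / ((R - 1) * (1 - q)))) * R ^ n ≤ ∏ i ∈ Finset.range n, (R - q ^ i) := by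
  have hR0 : (0 : ℝ) < R := lt_trans one_pos hR
  have hterm : ∀ i : ℕ, Real.exp (-(q ^ i / (R - 1))) ≤ 1 - q ^ i / R := fun i =>
    my_term_lb hR (pow_pos hq0 i) (pow_le_one₀ hq0.le hq1.le)
  have hsum : ∑ i ∈ Finset.range n, q ^ i ≤ 1 / (1 - q) := by
    have e := geom_sum_mul q n
    rw [le_div_iff₀ (by linarith : (0:ℝ) < 1 - q)]
    nlinarith [pow_pos hq0 n]
  have hsum2 : -(1 / ((R - 1) * (1 - q))) ≤ ∑ i ∈ Finset.range n, -(q ^ i / (R - 1)) := by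
    have h : (∑ i ∈ Finset.range n, q ^ i) / (R - 1) ≤ (1 / (1 - q)) / (R - 1) := by
      gcongr
    calc -(1 / ((R - 1) * (1 - q))) = -((1 / (1 - q)) / (R - 1)) := by
          rw [div_div, mul_comm]
      _ ≤ -((∑ i ∈ Finset.range n, q ^ i) / (R - 1)) := neg_le_neg h
      _ = ∑ i ∈ Finset.range n, -(q ^ i / (R - 1)) := by
          rw [Finset.sum_neg_distrib, Finset.sum_div]
  calc Real.exp (-(1 / ((R - 1) * (1 - q)))) * R ^ n
      ≤ Real.exp (∑ i ∈ Finset.range n, -(q ^ i / (R - 1))) * R ^ n := by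
        exact mul_le_mul_of_nonneg_right (Real.exp_le_exp.2 hsum2) (pow_nonneg hR0.le n)
    _ = (∏ i ∈ Finset.range n, Real.exp (-(q ^ i / (R - 1)))) * R ^ n := by
        rw [Real.exp_sum]
    _ ≤ (∏ i ∈ Finset.range n, (1 - q ^ i / R)) * R ^ n := by
        refine mul_le_mul_of_nonneg_right ?_ (pow_nonneg hR0.le n)
        exact Finset.prod_le_prod (fun i _ => (Real.exp_pos _).le) (fun i _ => hterm i)
    _ = ∏ i ∈ Finset.range n, ((1 - q ^ i / R) * R) := by
        rw [Finset.prod_mul_distrib, Finset.prod_const, Finset.card_range]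
    _ = ∏ i ∈ Finset.range n, (R - q ^ i) := by
        refine Finset.prod_congr rfl fun i _ => ?_
        field_simp

open Metric Complex in
/-- growth of divided differences of an analytic function at nodes `q^j`. -/
theorem stmt9 (q : ℝ) (hq0 : 0 < q) (hq1 : q < 1) (R : ℝ) (hR : 1 < R) (g : ℂ → ℂ)
    (hg : AnalyticOnNhd ℂ g (Metric.closedBall 0 R)) (lam : ℝ) (hlam0 : 0 < lam)
    (hlam : lam < Real.log R / Real.log (1 / q)) :
    ∃ C > 0, ∀ k : ℕ,
      ‖∑ j ∈ Finset.range (k + 1), g ((q : ℂ) ^ j) /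
          ∏ i ∈ (Finset.range (k + 1)).erase j, ((q : ℂ) ^ j - (q : ℂ) ^ i)‖
        ≤ C * q ^ (lam * (k : ℝ)) := by
  have hR0 : (0 : ℝ) < R := lt_trans one_pos hR
  -- sup of ‖g‖ on the closed ball
  have hgc : ContinuousOn g (closedBall (0 : ℂ) R) := hg.continuousOn
  obtain ⟨M, hM⟩ := (isCompact_closedBall (0 : ℂ) R).exists_bound_of_continuousOn hgc
  have hM0 : 0 ≤ M := le_trans (norm_nonneg _) (hM 0 (by simp [hR0.le]))
  -- the lower bound constant for products
  set c : ℝ := Real.exp (-(1 / ((R - 1) * (1 - q)))) with hc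
  have hc0 : 0 < c := Real.exp_pos _
  -- q ^ lam ≥ R⁻¹
  have hlogq : 0 < Real.log (1 / q) := Real.log_pos (one_lt_one_div hq0 hq1)
  have hcball : closure (Metric.ball (0:ℂ) R) = Metric.closedBall 0 R :=
    closure_ball 0 (ne_of_gt hR0)
  have hdc : DiffContOnCl ℂ g (Metric.ball (0:ℂ) R) :=
    DifferentiableOn.diffContOnCl (by rw [hcball]; exact hg.differentiableOn)
  have hxnorm : ∀ i : ℕ, ‖((q:ℂ)) ^ i‖ = q ^ i := by
    intro i; rw [norm_pow, Complex.norm_real, Real.norm_eq_abs, abs_of_pos hq0]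
  have hxlt : ∀ i : ℕ, ‖((q:ℂ)) ^ i‖ < R := fun i => by
    rw [hxnorm]; exact lt_of_le_of_lt (pow_le_one₀ hq0.le hq1.le) hR
  have hqlam : R⁻¹ ≤ q ^ lam := by
    have h1 : lam * Real.log (1 / q) < Real.log R :=
      (lt_div_iff₀ hlogq).mp hlam
    have h2 : -Real.log R ≤ lam * Real.log q := by
      rw [Real.log_div one_ne_zero (ne_of_gt hq0), Real.log_one, zero_sub, mul_neg] at h1
      linarith
    calc R⁻¹ = Real.exp (-Real.log R) := by rw [Real.exp_neg, Real.exp_log hR0]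
      _ ≤ Real.exp (lam * Real.log q) := Real.exp_le_exp.2 h2
      _ = q ^ lam := by rw [Real.rpow_def_of_pos hq0 lam, mul_comm]
  refine ⟨M / c + 1, by positivity, fun k => ?_⟩
  set s : Finset ℕ := Finset.range (k+1) with hs
  set x : ℕ → ℂ := fun j => (q:ℂ)^j with hx
  set D : ℕ → ℂ := fun j => ∏ i ∈ s.erase j, (x j - x i) with hD
  set P : ℂ → ℂ := fun z => ∏ i ∈ s, (z - x i) with hP
  have hinj : Set.InjOn x s := by
    intro i _ j _ h
    simp only [hx] at h
    have h' : (q:ℝ)^i = q^j := by exact_mod_cast h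
    exact (pow_right_strictAnti₀ hq0 hq1).injective h'
  have hzsub : ∀ z ∈ Metric.sphere (0:ℂ) R, ∀ i ∈ s, z - x i ≠ 0 := by
    intro z hzz i _
    have hz : ‖z‖ = R := mem_sphere_zero_iff_norm.mp hzz
    intro hcon
    have hzx : z = x i := sub_eq_zero.mp hcon
    rw [hzx] at hz
    exact absurd hz (ne_of_lt (hxlt i))
  have cauchy : ∀ j ∈ s, (∮ z in C(0, R), (z - x j)⁻¹ • g z)
      = (2 * (Real.pi : ℂ) * Complex.I) • g (x j) := fun j _ =>
    hdc.circleIntegral_sub_inv_smul (Metric.mem_ball.mpr (by rw [dist_zero_right]; exact hxlt j))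
  have hci : ∀ j ∈ s, CircleIntegrable (fun z => (z - x j)⁻¹ • g z) 0 R := by
    intro j hj
    apply ContinuousOn.circleIntegrable hR0.le
    exact ContinuousOn.smul
      (ContinuousOn.inv₀ (by fun_prop) (fun z hzz => hzsub z hzz j hj))
      (hgc.mono Metric.sphere_subset_closedBall)
  have hci' : ∀ j ∈ s, CircleIntegrable (fun z => (D j)⁻¹ • ((z - x j)⁻¹ • g z)) 0 R := by
    intro j hj
    apply ContinuousOn.circleIntegrable hR0.le
    exact (continuousOn_const (c := (D j)⁻¹)).smul (ContinuousOn.smul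
      (ContinuousOn.inv₀ (by fun_prop) (fun z hzz => hzsub z hzz j hj))
      (hgc.mono Metric.sphere_subset_closedBall))
  have hptw : Set.EqOn (fun z => (P z)⁻¹ • g z)
      (fun z => ∑ j ∈ s, (D j)⁻¹ • ((z - x j)⁻¹ • g z)) (Metric.sphere (0:ℂ) R) := by
    intro z hzz
    simp only [hP]
    rw [my_partial_fractions s x hinj ⟨0, by simp [hs]⟩ z (hzsub z hzz), Finset.sum_smul]
    exact Finset.sum_congr rfl fun j _ => by rw [mul_smul]
  have hid : (∮ z in C(0,R), (P z)⁻¹ • g z)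
      = (2 * (Real.pi : ℂ) * Complex.I) • ∑ j ∈ s, g (x j) / D j := by
    rw [circleIntegral.integral_congr hR0.le hptw,
      my_circleIntegral_finset_sum s _ 0 R hci']
    calc (∑ j ∈ s, ∮ z in C(0,R), (D j)⁻¹ • ((z - x j)⁻¹ • g z))
        = ∑ j ∈ s, ((D j)⁻¹ • ∮ z in C(0,R), (z - x j)⁻¹ • g z) :=
          Finset.sum_congr rfl fun j _ => circleIntegral.integral_smul _ _ _ _
      _ = ∑ j ∈ s, (D j)⁻¹ • ((2 * (Real.pi : ℂ) * Complex.I) • g (x j)) :=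
          Finset.sum_congr rfl fun j hj => by rw [cauchy j hj]
      _ = (2 * (Real.pi : ℂ) * Complex.I) • ∑ j ∈ s, g (x j) / D j := by
          rw [Finset.smul_sum]
          refine Finset.sum_congr rfl fun j _ => ?_
          simp only [smul_eq_mul, div_eq_mul_inv]; ring
  have hprodlb := my_prod_lb hq0 hq1 hR (k+1)
  have hPlb : ∀ z ∈ Metric.sphere (0:ℂ) R, c * R^(k+1) ≤ ‖P z‖ := by
    intro z hzz
    have hz : ‖z‖ = R := mem_sphere_zero_iff_norm.mp hzz
    calc c * R^(k+1) ≤ ∏ i ∈ Finset.range (k+1), (R - q^i) := hprodlb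
      _ ≤ ∏ i ∈ s, ‖z - x i‖ := by
          refine Finset.prod_le_prod (fun i _ => ?_) (fun i _ => ?_)
          · have := pow_le_one₀ hq0.le hq1.le (n := i); linarith
          · calc R - q^i = ‖z‖ - ‖x i‖ := by rw [hz, hx]; simp only []; rw [hxnorm]
              _ ≤ ‖z - x i‖ := norm_sub_norm_le z (x i)
      _ = ‖P z‖ := (norm_prod s _).symm
  have hcRpos : (0:ℝ) < c * R^(k+1) := by positivity
  have hbound : ∀ z ∈ Metric.sphere (0:ℂ) R, ‖(P z)⁻¹ • g z‖ ≤ (c * R^(k+1))⁻¹ * M := by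
    intro z hzz
    rw [norm_smul, norm_inv]
    exact mul_le_mul (inv_anti₀ hcRpos (hPlb z hzz))
      (hM z (Metric.sphere_subset_closedBall hzz)) (norm_nonneg _) (by positivity)
  have hnorm := circleIntegral.norm_integral_le_of_norm_le_const hR0.le hbound
  rw [hid, norm_smul] at hnorm
  have h2pi : ‖(2 * (Real.pi : ℂ) * Complex.I : ℂ)‖ = 2 * Real.pi := by
    simp [norm_mul, Complex.norm_real, _root_.abs_of_nonneg Real.pi_pos.le]
  rw [h2pi] at hnorm
  have h2pipos : (0:ℝ) < 2 * Real.pi := Real.two_pi_pos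
  have hSb : ‖∑ j ∈ s, g (x j) / D j‖ ≤ R * ((c * R^(k+1))⁻¹ * M) :=
    (mul_le_mul_iff_right₀ h2pipos).mp (le_of_le_of_eq hnorm (by ring))
  have heq : R * ((c * R^(k+1))⁻¹ * M) = (M / c) * (R⁻¹)^k := by
    rw [pow_succ]
    field_simp
    rw [mul_comm (R^k) M, mul_assoc, ← mul_pow, mul_one_div_cancel hR0.ne', one_pow, mul_one]
  have hpow : (R⁻¹ : ℝ)^k ≤ (q ^ lam)^k :=
    pow_le_pow_left₀ (inv_nonneg.mpr hR0.le) hqlam k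
  have hrpow : (q ^ lam : ℝ)^k = q ^ (lam * (k:ℝ)) := by
    rw [Real.rpow_mul hq0.le, Real.rpow_natCast]
  have hfin : ‖∑ j ∈ s, g (x j) / D j‖ ≤ (M / c + 1) * q ^ (lam * (k:ℝ)) := by
    calc ‖∑ j ∈ s, g (x j) / D j‖ ≤ R * ((c * R^(k+1))⁻¹ * M) := hSb
      _ = (M / c) * (R⁻¹)^k := heq
      _ ≤ (M / c) * (q ^ lam)^k := by
          exact mul_le_mul_of_nonneg_left hpow (by positivity)
      _ = (M / c) * q ^ (lam * (k:ℝ)) := by rw [hrpow]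
      _ ≤ (M / c + 1) * q ^ (lam * (k:ℝ)) := by
          have : (0:ℝ) ≤ q ^ (lam * (k:ℝ)) := Real.rpow_nonneg hq0.le _
          nlinarith
  exact hfin
end

section
/- Let $0<q<1$ and $\mu > 0$. There exist constants $C_1, C_2>0$ such that for all sufficiently large $r$, $C_1 \frac{(-r;q)_\infty}{r^\mu} \leq (-q^\mu r;q)_\infty \leq C_2 \frac{(-r;q)_\infty}{r^\mu}$. -/
open Filter Finset Asymptotics
open Real

section helpers
variable {q : ℝ}

lemma summable_log_one_add (hq0 : 0 < q) (hq1 : q < 1) {a : ℝ} (ha : 0 ≤ a) :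
    Summable (fun i : ℕ => Real.log (1 + a * q ^ i)) := by
  have hsum : Summable (fun i : ℕ => a * q ^ i) :=
    (summable_geometric_of_lt_one hq0.le hq1).mul_left a
  refine Summable.of_nonneg_of_le
    (fun i => Real.log_nonneg (by nlinarith [pow_pos hq0 i, mul_nonneg ha (pow_pos hq0 i).le]))
    (fun i => ?_) hsum
  have := Real.log_le_sub_one_of_pos (x := 1 + a * q ^ i) (by positivity)
  linarith

lemma hasProd_one_add (hq0 : 0 < q) (hq1 : q < 1) {a : ℝ} (ha : 0 ≤ a) :
    HasProd (fun i : ℕ => 1 + a * q ^ i)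
      (Real.exp (∑' i : ℕ, Real.log (1 + a * q ^ i))) := by
  have h := (summable_log_one_add hq0 hq1 ha).hasSum.rexp
  convert h using 2 with i
  rw [Function.comp_apply, Real.exp_log (by positivity)]

lemma multipliable_one_add (hq0 : 0 < q) (hq1 : q < 1) {a : ℝ} (ha : 0 ≤ a) :
    Multipliable (fun i : ℕ => 1 + a * q ^ i) :=
  ⟨_, hasProd_one_add hq0 hq1 ha⟩

lemma one_le_tprod_one_add (hq0 : 0 < q) (hq1 : q < 1) {a : ℝ} (ha : 0 ≤ a) :
    1 ≤ ∏' i : ℕ, (1 + a * q ^ i) := by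
  rw [(hasProd_one_add hq0 hq1 ha).tprod_eq]
  exact Real.one_le_exp <| tsum_nonneg fun i =>
    Real.log_nonneg (by nlinarith [mul_nonneg ha (pow_pos hq0 i).le])

lemma tprod_one_add_le (hq0 : 0 < q) (hq1 : q < 1) {a : ℝ} (ha : 0 ≤ a) :
    ∏' i : ℕ, (1 + a * q ^ i) ≤ Real.exp (a * (1 - q)⁻¹) := by
  rw [(hasProd_one_add hq0 hq1 ha).tprod_eq, Real.exp_le_exp]
  have hsum : Summable (fun i : ℕ => a * q ^ i) :=
    (summable_geometric_of_lt_one hq0.le hq1).mul_left a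
  calc ∑' i : ℕ, Real.log (1 + a * q ^ i) ≤ ∑' i : ℕ, a * q ^ i := by
        refine Summable.tsum_le_tsum (fun i => ?_) (summable_log_one_add hq0 hq1 ha) hsum
        have := Real.log_le_sub_one_of_pos (x := 1 + a * q ^ i) (by positivity)
        linarith
    _ = a * (1 - q)⁻¹ := by
        rw [tsum_mul_left, tsum_geometric_of_lt_one hq0.le hq1]

end helpers

set_option maxHeartbeats 1000000 in
/-- `(-q^μ r; q)_∞ ≍ (-r;q)_∞ / r^μ`. -/
theorem stmt10 (q : ℝ) (hq0 : 0 < q) (hq1 : q < 1) (μ : ℝ) (hμ : 0 < μ) :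
    ∃ C₁ > (0 : ℝ), ∃ C₂ > (0 : ℝ), ∀ᶠ r : ℝ in atTop,
      C₁ * (qpiR q (-r) / r ^ μ) ≤ qpiR q (-(q ^ μ * r)) ∧
        qpiR q (-(q ^ μ * r)) ≤ C₂ * (qpiR q (-r) / r ^ μ) := by
  have hq1' : 0 < 1 - q := by linarith
  refine ⟨q ^ μ * Real.exp (-(1 - q)⁻¹), by positivity,
    Real.exp (((q ^ μ)⁻¹ - 1) * (1 - q)⁻¹) * Real.exp ((1 - q)⁻¹), by positivity, ?_⟩
  filter_upwards [eventually_ge_atTop (1 : ℝ)] with r hr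
  set s : ℝ := q ^ μ with hs_def
  have hs0 : 0 < s := Real.rpow_pos_of_pos hq0 μ
  have hs1 : s < 1 := Real.rpow_lt_one hq0.le hq1 hμ
  set L : ℝ := -Real.log q with hL_def
  have hL : 0 < L := by
    have := Real.log_neg hq0 hq1
    simp only [hL_def]; linarith
  have hr0 : (0 : ℝ) < r := lt_of_lt_of_le one_pos hr
  have hlogr : 0 ≤ Real.log r := Real.log_nonneg hr
  obtain ⟨N, hN1, hN2⟩ : ∃ N : ℕ, (N : ℝ) * L ≤ Real.log r ∧
      Real.log r < ((N : ℝ) + 1) * L := by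
    refine ⟨⌊Real.log r / L⌋₊, ?_, ?_⟩
    · have h := Nat.floor_le (div_nonneg hlogr hL.le)
      rw [le_div_iff₀ hL] at h
      exact h
    · have h := Nat.lt_floor_add_one (Real.log r / L)
      rw [div_lt_iff₀ hL] at h
      exact_mod_cast h
  have hqpow : ∀ n : ℕ, q ^ n = Real.exp (-((n : ℝ) * L)) := by
    intro n
    rw [hL_def]
    rw [show -((n : ℝ) * -Real.log q) = (n : ℝ) * Real.log q by ring]
    rw [Real.exp_nat_mul, Real.exp_log hq0]
  have hrlog : r = Real.exp (Real.log r) := (Real.exp_log hr0).symm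
  have hqN : 1 ≤ q ^ N * r := by
    rw [hqpow N]
    nth_rewrite 1 [hrlog]
    rw [← Real.exp_add]
    exact Real.one_le_exp (by linarith)
  have hqN1 : q ^ (N + 1) * r ≤ 1 := by
    rw [hqpow (N + 1)]
    nth_rewrite 1 [hrlog]
    rw [← Real.exp_add, Real.exp_le_one_iff]
    push_cast
    nlinarith [hN2]
  have hrμ : r ^ μ = Real.exp (μ * Real.log r) := by
    rw [Real.rpow_def_of_pos hr0, mul_comm]
  have hrμ0 : (0 : ℝ) < r ^ μ := Real.rpow_pos_of_pos hr0 μ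
  have hsexp : s = Real.exp (-(μ * L)) := by
    rw [hs_def, Real.rpow_def_of_pos hq0, hL_def]
    ring_nf
  have hsN : ∀ n : ℕ, s ^ n = Real.exp (-((n : ℝ) * (μ * L))) := by
    intro n
    rw [hsexp, ← Real.exp_nat_mul]
    ring_nf
  have hup : s ^ (N + 1) * r ^ μ ≤ 1 := by
    rw [hsN, hrμ, ← Real.exp_add, Real.exp_le_one_iff]
    push_cast
    nlinarith [mul_le_mul_of_nonneg_left hN2.le hμ.le]
  have hlo : s ≤ s ^ (N + 1) * r ^ μ := by
    rw [hsN, hrμ, hsexp, ← Real.exp_add, Real.exp_le_exp]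
    push_cast
    nlinarith [mul_le_mul_of_nonneg_left hN1 hμ.le]
  -- products
  set PA := ∏ i ∈ Finset.range (N + 1), (1 + r * q ^ i) with hPA_def
  set PB := ∏ i ∈ Finset.range (N + 1), (1 + s * r * q ^ i) with hPB_def
  set TA := ∏' i : ℕ, (1 + r * q ^ (N + 1) * q ^ i) with hTA_def
  set TB := ∏' i : ℕ, (1 + s * r * q ^ (N + 1) * q ^ i) with hTB_def
  have hsplit : ∀ a : ℝ, 0 ≤ a → (∏' i : ℕ, (1 + a * q ^ i)) =
      (∏ i ∈ Finset.range (N + 1), (1 + a * q ^ i)) *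
        ∏' i : ℕ, (1 + a * q ^ (N + 1) * q ^ i) := by
    intro a ha
    have h' : Multipliable (fun n : ℕ => 1 + a * q ^ (n + (N + 1))) := by
      refine (multipliable_one_add hq0 hq1 (a := a * q ^ (N + 1))
        (by positivity)).congr fun b => ?_
      rw [pow_add]; ring
    rw [← Multipliable.prod_mul_tprod_nat_mul' h']
    congr 1
    exact tprod_congr fun i => by rw [pow_add]; ring
  have hA : qpiR q (-r) = PA * TA := by
    rw [qpiR]
    rw [show (fun i : ℕ => 1 - -r * q ^ i) = fun i : ℕ => 1 + r * q ^ i by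
      funext i; ring]
    exact hsplit r hr0.le
  have hB : qpiR q (-(s * r)) = PB * TB := by
    rw [qpiR]
    rw [show (fun i : ℕ => 1 - -(s * r) * q ^ i) = fun i : ℕ => 1 + s * r * q ^ i by
      funext i; ring]
    exact hsplit (s * r) (by positivity)
  have hq1r : r * q ^ (N + 1) ≤ 1 := by rw [mul_comm]; exact hqN1
  have hTA1 : 1 ≤ TA := one_le_tprod_one_add hq0 hq1 (by positivity)
  have hTB1 : 1 ≤ TB := one_le_tprod_one_add hq0 hq1 (by positivity)
  have hTAu : TA ≤ Real.exp ((1 - q)⁻¹) := by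
    refine (tprod_one_add_le hq0 hq1 (by positivity)).trans (Real.exp_le_exp.2 ?_)
    have h1 : r * q ^ (N + 1) ≤ 1 := hq1r
    exact mul_le_of_le_one_left (by positivity) h1
  have hTBu : TB ≤ Real.exp ((1 - q)⁻¹) := by
    refine (tprod_one_add_le hq0 hq1 (by positivity)).trans (Real.exp_le_exp.2 ?_)
    have h1 : s * r * q ^ (N + 1) ≤ 1 := by nlinarith [mul_nonneg hr0.le (pow_pos hq0 (N+1)).le]
    exact mul_le_of_le_one_left (by positivity) h1
  have hPA0 : (0 : ℝ) < PA :=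
    Finset.prod_pos fun i _ => by positivity
  have hPB0 : (0 : ℝ) < PB :=
    Finset.prod_pos fun i _ => by positivity
  have hPBl : s ^ (N + 1) * PA ≤ PB := by
    have hrw : s ^ (N + 1) * PA = ∏ i ∈ Finset.range (N + 1), (s * (1 + r * q ^ i)) := by
      rw [Finset.prod_mul_distrib, Finset.prod_const, Finset.card_range]
    rw [hrw, hPB_def]
    refine Finset.prod_le_prod (fun i _ => by positivity) (fun i _ => ?_)
    nlinarith [mul_nonneg hr0.le (pow_pos hq0 i).le]
  have hc : (0 : ℝ) ≤ s⁻¹ - 1 := by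
    have : (1 : ℝ) ≤ s⁻¹ := (one_le_inv₀ hs0).2 hs1.le
    linarith
  have hPBu : PB ≤ s ^ (N + 1) * PA * Real.exp ((s⁻¹ - 1) * (1 - q)⁻¹) := by
    have key : PB ≤ ∏ i ∈ Finset.range (N + 1),
        (s * (1 + r * q ^ i) * (1 + (s⁻¹ - 1) * q ^ (N - i))) := by
      rw [hPB_def]
      refine Finset.prod_le_prod (fun i _ => by positivity) (fun i hi => ?_)
      have hiN : i ≤ N := Nat.lt_succ_iff.1 (Finset.mem_range.1 hi)
      have hut : 1 ≤ q ^ (N - i) * (r * q ^ i) := by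
        have hqq : q ^ (N - i) * q ^ i = q ^ N := by
          rw [← pow_add, Nat.sub_add_cancel hiN]
        calc (1 : ℝ) ≤ q ^ N * r := hqN
          _ = q ^ (N - i) * (r * q ^ i) := by rw [← hqq]; ring
      have hexp : s * (1 + r * q ^ i) * (1 + (s⁻¹ - 1) * q ^ (N - i)) =
          s + s * (r * q ^ i) + (1 - s) * q ^ (N - i)
            + (1 - s) * (q ^ (N - i) * (r * q ^ i)) := by
        field_simp
        ring
      have h1 : 0 ≤ (1 - s) * q ^ (N - i) :=
        mul_nonneg (by linarith) (pow_pos hq0 _).le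
      have h2 : (1 - s) * 1 ≤ (1 - s) * (q ^ (N - i) * (r * q ^ i)) :=
        mul_le_mul_of_nonneg_left hut (by linarith)
      rw [hexp]
      nlinarith
    refine key.trans ?_
    have hrw : ∏ i ∈ Finset.range (N + 1),
        (s * (1 + r * q ^ i) * (1 + (s⁻¹ - 1) * q ^ (N - i))) =
        s ^ (N + 1) * PA * ∏ i ∈ Finset.range (N + 1), (1 + (s⁻¹ - 1) * q ^ (N - i)) := by
      rw [Finset.prod_mul_distrib, Finset.prod_mul_distrib, Finset.prod_const,
        Finset.card_range]
    rw [hrw]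
    refine mul_le_mul_of_nonneg_left ?_ (by positivity)
    calc ∏ i ∈ Finset.range (N + 1), (1 + (s⁻¹ - 1) * q ^ (N - i))
        ≤ ∏ i ∈ Finset.range (N + 1), Real.exp ((s⁻¹ - 1) * q ^ (N - i)) := by
          refine Finset.prod_le_prod (fun i _ => by positivity) (fun i _ => ?_)
          linarith [Real.add_one_le_exp ((s⁻¹ - 1) * q ^ (N - i))]
      _ = Real.exp (∑ i ∈ Finset.range (N + 1), (s⁻¹ - 1) * q ^ (N - i)) :=
          (Real.exp_sum _ _).symm
      _ ≤ Real.exp ((s⁻¹ - 1) * (1 - q)⁻¹) := by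
          rw [Real.exp_le_exp, ← Finset.mul_sum]
          refine mul_le_mul_of_nonneg_left ?_ hc
          have hrefl : ∑ i ∈ Finset.range (N + 1), q ^ (N - i)
              = ∑ i ∈ Finset.range (N + 1), q ^ i := by
            have h := Finset.sum_range_reflect (fun j => q ^ j) (N + 1)
            simpa using h
          rw [hrefl]
          calc ∑ i ∈ Finset.range (N + 1), q ^ i ≤ ∑' i : ℕ, q ^ i :=
              Summable.sum_le_tsum _ (fun i _ => (pow_pos hq0 i).le)
                (summable_geometric_of_lt_one hq0.le hq1)
            _ = (1 - q)⁻¹ := tsum_geometric_of_lt_one hq0.le hq1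
  -- final assembly
  have hee : Real.exp (-(1 - q)⁻¹) * Real.exp ((1 - q)⁻¹) = 1 := by
    rw [← Real.exp_add, neg_add_cancel, Real.exp_zero]
  constructor
  · rw [hA, hB, mul_div_assoc', div_le_iff₀ hrμ0]
    calc s * Real.exp (-(1 - q)⁻¹) * (PA * TA)
        ≤ s * Real.exp (-(1 - q)⁻¹) * (PA * Real.exp ((1 - q)⁻¹)) := by
          refine mul_le_mul_of_nonneg_left (mul_le_mul_of_nonneg_left hTAu hPA0.le)
            (by positivity)
      _ = s * PA := by
          rw [show s * Real.exp (-(1 - q)⁻¹) * (PA * Real.exp ((1 - q)⁻¹))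
            = s * PA * (Real.exp (-(1 - q)⁻¹) * Real.exp ((1 - q)⁻¹)) by ring, hee, mul_one]
      _ ≤ s ^ (N + 1) * r ^ μ * PA := mul_le_mul_of_nonneg_right hlo hPA0.le
      _ = s ^ (N + 1) * PA * r ^ μ := by ring
      _ ≤ PB * r ^ μ := mul_le_mul_of_nonneg_right hPBl hrμ0.le
      _ ≤ PB * TB * r ^ μ := by
          refine mul_le_mul_of_nonneg_right ?_ hrμ0.le
          exact le_mul_of_one_le_right hPB0.le hTB1
  · rw [hA, hB, mul_div_assoc', le_div_iff₀ hrμ0]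
    calc PB * TB * r ^ μ
        ≤ (s ^ (N + 1) * PA * Real.exp ((s⁻¹ - 1) * (1 - q)⁻¹)) *
            Real.exp ((1 - q)⁻¹) * r ^ μ := by
          refine mul_le_mul_of_nonneg_right ?_ hrμ0.le
          exact mul_le_mul hPBu hTBu (by positivity) (by positivity)
      _ = s ^ (N + 1) * r ^ μ *
            (PA * (Real.exp ((s⁻¹ - 1) * (1 - q)⁻¹) * Real.exp ((1 - q)⁻¹))) := by ring
      _ ≤ 1 * (PA * (Real.exp ((s⁻¹ - 1) * (1 - q)⁻¹) * Real.exp ((1 - q)⁻¹))) := by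
          refine mul_le_mul_of_nonneg_right hup (by positivity)
      _ = Real.exp ((s⁻¹ - 1) * (1 - q)⁻¹) * Real.exp ((1 - q)⁻¹) * PA := by ring
      _ ≤ Real.exp ((s⁻¹ - 1) * (1 - q)⁻¹) * Real.exp ((1 - q)⁻¹) * (PA * TA) := by
          refine mul_le_mul_of_nonneg_left ?_ (by positivity)
          exact le_mul_of_one_le_right hPA0.le hTA1
end

section
/- Let $0<q<1$. There exist constants $C_1, C_2>0$ such that for all sufficiently large $r$, $C_1 \exp\{\frac{\ln^2 r}{2\ln(1/q)} + \frac{\ln r}{2}\} \leq \prod_{j=0}^\infty(1+rq^j) \leq C_2 \exp\{\frac{\ln^2 r}{2\ln(1/q)} + \frac{\ln r}{2}\}$. -/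
open Filter Finset Asymptotics

private lemma sum_range_id_real (n : ℕ) :
    ∑ j ∈ Finset.range n, (j : ℝ) = n * ((n : ℝ) - 1) / 2 := by
  induction n with
  | zero => simp
  | succ m ih => rw [Finset.sum_range_succ, ih]; push_cast; ring

private lemma log_summable {q : ℝ} (hq0 : 0 < q) (hq1 : q < 1) (r : ℝ) (hr : 0 ≤ r) :
    Summable (fun j : ℕ => Real.log (1 + r * q ^ j)) := by
  have hgeo : Summable (fun j : ℕ => r * q ^ j) :=
    (summable_geometric_of_lt_one hq0.le hq1).mul_left r
  refine Summable.of_nonneg_of_le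
    (fun j => Real.log_nonneg (by have := mul_nonneg hr (pow_nonneg hq0.le j); linarith))
    (fun j => ?_) hgeo
  have h1 : (0:ℝ) < 1 + r * q ^ j := by positivity
  have := Real.log_le_sub_one_of_pos h1
  linarith

private lemma tprod_eq_exp {q : ℝ} (hq0 : 0 < q) (hq1 : q < 1) {r : ℝ} (hr : 0 < r) :
    ∏' j : ℕ, (1 + r * q ^ j) =
      Real.exp (∑' j : ℕ, Real.log (1 + r * q ^ j)) := by
  have hs := log_summable hq0 hq1 r hr.le
  have h := hs.hasSum.rexp
  have he : (Real.exp ∘ fun j : ℕ => Real.log (1 + r * q ^ j)) =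
      fun j : ℕ => 1 + r * q ^ j := by
    funext j
    exact Real.exp_log (by positivity)
  rw [he] at h
  exact h.tprod_eq

set_option maxHeartbeats 1000000 in
/-- two-sided asymptotics for `(-r;q)_∞`. -/
theorem stmt11 (q : ℝ) (hq0 : 0 < q) (hq1 : q < 1) :
    ∃ C₁ > (0 : ℝ), ∃ C₂ > (0 : ℝ), ∀ᶠ r : ℝ in atTop,
      C₁ * Real.exp ((Real.log r) ^ 2 / (2 * Real.log (1 / q)) + Real.log r / 2)
          ≤ ∏' j : ℕ, (1 + r * q ^ j) ∧
        ∏' j : ℕ, (1 + r * q ^ j)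
          ≤ C₂ * Real.exp ((Real.log r) ^ 2 / (2 * Real.log (1 / q)) + Real.log r / 2) := by
  set t := Real.log (1 / q) with htdef
  have ht : 0 < t := Real.log_pos (one_lt_one_div hq0 hq1)
  have hlogq : Real.log q = -t := by
    rw [htdef, one_div, Real.log_inv]; ring
  have hKls : Summable (fun k : ℕ => Real.log (1 + q ^ k)) := by
    have := log_summable hq0 hq1 1 zero_le_one
    simpa using this
  set Kl := ∑' k : ℕ, Real.log (1 + q ^ k) with hKldef
  refine ⟨1, one_pos, Real.exp (t / 8 + 2 * Kl), Real.exp_pos _, ?_⟩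
  filter_upwards [eventually_ge_atTop (1 : ℝ)] with r hr1
  have hr0 : (0:ℝ) < r := lt_of_lt_of_le one_pos hr1
  have hs := log_summable hq0 hq1 r hr0.le
  set S := ∑' j : ℕ, Real.log (1 + r * q ^ j) with hSdef
  have hlr : 0 ≤ Real.log r := Real.log_nonneg hr1
  set L := Real.log r / t with hLdef
  have hL0 : 0 ≤ L := div_nonneg hlr ht.le
  set n : ℕ := ⌊L⌋₊ + 1 with hndef
  have hLN : L < (n : ℝ) := by
    rw [hndef]; push_cast; exact Nat.lt_floor_add_one L
  have hNL : (n : ℝ) ≤ L + 1 := by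
    rw [hndef]; push_cast
    have := Nat.floor_le hL0
    linarith
  have hlogrt : Real.log r = t * L := by
    rw [hLdef]; field_simp
  have hrq : ∀ m : ℕ, r * q ^ m = Real.exp (t * (L - m)) := by
    intro m
    have hq_eq : q ^ m = Real.exp (-(t * m)) := by
      rw [← Real.exp_log hq0, ← Real.exp_nat_mul]
      congr 1
      rw [hlogq]; ring
    rw [hq_eq, ← Real.exp_log hr0, ← Real.exp_add, hlogrt]
    congr 1; ring
  have hhigh : r * q ^ n ≤ 1 := by
    rw [hrq n]
    calc Real.exp (t * (L - n)) ≤ Real.exp 0 := by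
          apply Real.exp_le_exp.2
          nlinarith [mul_nonneg ht.le (sub_nonneg.2 hLN.le)]
      _ = 1 := Real.exp_zero
  have hn1 : ((n - 1 : ℕ) : ℝ) = (n : ℝ) - 1 := by
    rw [hndef]; push_cast [Nat.add_sub_cancel]; ring
  have hlow : 1 ≤ r * q ^ (n - 1) := by
    rw [hrq (n - 1), hn1]
    calc (1:ℝ) = Real.exp 0 := Real.exp_zero.symm
      _ ≤ Real.exp (t * (L - ((n:ℝ) - 1))) := by
          apply Real.exp_le_exp.2
          nlinarith [mul_nonneg ht.le (sub_nonneg.2 (by linarith : (n:ℝ) - 1 ≤ L))]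
  have hA : ∑ j ∈ Finset.range n, Real.log (r * q ^ j)
      = t * ((n : ℝ) * L - (n : ℝ) * ((n : ℝ) - 1) / 2) := by
    have hterm : ∀ j : ℕ, Real.log (r * q ^ j) = Real.log r + (j : ℝ) * Real.log q := by
      intro j
      rw [Real.log_mul (ne_of_gt hr0) (pow_ne_zero j (ne_of_gt hq0)), Real.log_pow]
    calc ∑ j ∈ Finset.range n, Real.log (r * q ^ j)
        = ∑ j ∈ Finset.range n, (Real.log r + (j : ℝ) * Real.log q) :=
          Finset.sum_congr rfl fun j _ => hterm j
      _ = (n : ℝ) * Real.log r + (∑ j ∈ Finset.range n, (j : ℝ)) * Real.log q := by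
          rw [Finset.sum_add_distrib, Finset.sum_const, ← Finset.sum_mul]
          simp [nsmul_eq_mul]
      _ = t * ((n : ℝ) * L - (n : ℝ) * ((n : ℝ) - 1) / 2) := by
          rw [sum_range_id_real, hlogrt, hlogq]; ring
  have hfnonneg : ∀ i : ℕ, 0 ≤ Real.log (1 + r * q ^ i) := fun i =>
    Real.log_nonneg (by nlinarith [mul_nonneg hr0.le (pow_nonneg hq0.le i)])
  have hgnonneg : ∀ i : ℕ, 0 ≤ Real.log (1 + q ^ i) := fun i =>
    Real.log_nonneg (by nlinarith [pow_nonneg hq0.le i])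
  -- lower bound on the sum
  have hAlow : t * L ^ 2 / 2 + t * L / 2 ≤ ∑ j ∈ Finset.range n, Real.log (r * q ^ j) := by
    rw [hA]
    have key1 : 0 ≤ ((n:ℝ) - L) * (L + 1 - (n:ℝ)) :=
      mul_nonneg (by linarith) (by linarith)
    nlinarith [mul_nonneg ht.le key1]
  have hstep1 : ∑ j ∈ Finset.range n, Real.log (r * q ^ j)
      ≤ ∑ j ∈ Finset.range n, Real.log (1 + r * q ^ j) :=
    Finset.sum_le_sum fun j _ => Real.log_le_log (by positivity) (by linarith)
  have hstep2 : ∑ j ∈ Finset.range n, Real.log (1 + r * q ^ j) ≤ S :=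
    Summable.sum_le_tsum (Finset.range n) (fun i _ => hfnonneg i) hs
  -- upper bound on the sum
  have hsplit : ∑ j ∈ Finset.range n, Real.log (1 + r * q ^ j)
      + ∑' k : ℕ, Real.log (1 + r * q ^ (k + n)) = S := Summable.sum_add_tsum_nat_add n hs
  have htail : ∑' k : ℕ, Real.log (1 + r * q ^ (k + n)) ≤ Kl := by
    refine Summable.tsum_le_tsum (fun k => ?_) ((summable_nat_add_iff n).2 hs) hKls
    refine Real.log_le_log (by positivity) ?_
    have h1 : r * q ^ (k + n) ≤ q ^ k := by
      have h2 : r * q ^ (k + n) = (r * q ^ n) * q ^ k := by rw [pow_add]; ring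
      rw [h2]
      calc (r * q ^ n) * q ^ k ≤ 1 * q ^ k :=
            mul_le_mul_of_nonneg_right hhigh (pow_nonneg hq0.le k)
        _ = q ^ k := one_mul _
    linarith
  have hhead : ∑ j ∈ Finset.range n, Real.log (1 + r * q ^ j)
      ≤ ∑ j ∈ Finset.range n, Real.log (r * q ^ j) + Kl := by
    have hterm : ∀ j ∈ Finset.range n, Real.log (1 + r * q ^ j)
        ≤ Real.log (r * q ^ j) + Real.log (1 + q ^ (n - 1 - j)) := by
      intro j hj
      have hjn : j ≤ n - 1 := by
        have := Finset.mem_range.1 hj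
        omega
      have hpow : q ^ j * q ^ (n - 1 - j) = q ^ (n - 1) := by
        rw [← pow_add]
        congr 1
        omega
      have hx : (0:ℝ) < r * q ^ j := by positivity
      rw [← Real.log_mul (ne_of_gt hx)
        (ne_of_gt (by positivity : (0:ℝ) < 1 + q ^ (n - 1 - j)))]
      refine Real.log_le_log (by positivity) ?_
      have he : r * q ^ j * (1 + q ^ (n - 1 - j)) = r * q ^ j + r * q ^ (n - 1) := by
        rw [mul_add, mul_one, mul_assoc, hpow]
      rw [he]
      linarith
    calc ∑ j ∈ Finset.range n, Real.log (1 + r * q ^ j)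
        ≤ ∑ j ∈ Finset.range n,
            (Real.log (r * q ^ j) + Real.log (1 + q ^ (n - 1 - j))) :=
          Finset.sum_le_sum hterm
      _ = ∑ j ∈ Finset.range n, Real.log (r * q ^ j)
            + ∑ j ∈ Finset.range n, Real.log (1 + q ^ (n - 1 - j)) :=
          Finset.sum_add_distrib
      _ ≤ ∑ j ∈ Finset.range n, Real.log (r * q ^ j) + Kl := by
          have hrefl := Finset.sum_range_reflect (fun k => Real.log (1 + q ^ k)) n
          have hle : ∑ j ∈ Finset.range n, Real.log (1 + q ^ (n - 1 - j)) ≤ Kl := by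
            rw [hrefl]
            exact Summable.sum_le_tsum (Finset.range n) (fun i _ => hgnonneg i) hKls
          linarith
  have hAup : ∑ j ∈ Finset.range n, Real.log (r * q ^ j)
      ≤ t * L ^ 2 / 2 + t * L / 2 + t / 8 := by
    rw [hA]
    nlinarith [mul_nonneg ht.le (sq_nonneg ((n:ℝ) - L - 1/2))]
  have htarget : (Real.log r) ^ 2 / (2 * t) + Real.log r / 2 = t * L ^ 2 / 2 + t * L / 2 := by
    rw [hlogrt]
    field_simp
  rw [tprod_eq_exp hq0 hq1 hr0, ← hSdef, htarget]
  constructor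
  · rw [one_mul]
    apply Real.exp_le_exp.2
    linarith
  · rw [← Real.exp_add]
    apply Real.exp_le_exp.2
    linarith
end

section
/- Let $0<q<1$, $f\in C[0,1]$, $\rho(z) = \sum_{j=0}^\infty \frac{f(q^j)q^j}{(q;q)_j} z^j$, and suppose $\rho$ is analytic on $\{|z|\leq R\}$ for some $R>1$. Then for every $\lambda < (\ln R)/\ln(1/q)$, $M(r; D_{\infty,q}f) = o\left(\frac{(-r;q)_\infty}{r^\lambda}\right)$ as $r\to\infty$. -/
open Filter Finset Asymptotics

section AuxSplit

variable {M : Type*} [CommMonoid M] [TopologicalSpace M] [ContinuousMul M]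

lemma aux_hasProd_split (f : ℕ → M) (k : ℕ) {a : M} (h : HasProd (fun n => f (n + k)) a) :
    HasProd f ((∏ i ∈ Finset.range k, f i) * a) := by
  classical
  have h1 : HasProd (fun n => if n < k then f n else 1) (∏ i ∈ Finset.range k, f i) := by
    have h0 : ∀ b ∉ Finset.range k, (if b < k then f b else 1) = 1 := by
      intro b hb; rw [if_neg]; simpa using hb
    have h2 : HasProd (fun b => if b < k then f b else 1)
        (∏ b ∈ Finset.range k, if b < k then f b else 1) :=
      hasProd_prod_of_ne_finset_one (s := Finset.range k) h0
    have h3 : (∏ b ∈ Finset.range k, if b < k then f b else 1) = ∏ i ∈ Finset.range k, f i :=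
      Finset.prod_congr rfl fun i hi => by rw [if_pos (Finset.mem_range.mp hi)]
    rwa [h3] at h2
  have h2 : HasProd (fun n => if n < k then 1 else f n) a := by
    have hinj : Function.Injective (fun n : ℕ => n + k) := add_left_injective k
    have hoff : ∀ c ∉ Set.range (fun n : ℕ => n + k), (if c < k then (1 : M) else f c) = 1 := by
      intro c hc
      have : c < k := by
        by_contra hck
        exact hc ⟨c - k, Nat.sub_add_cancel (Nat.not_lt.mp hck)⟩
      simp [this]
    have hcomp : ((fun n => if n < k then (1 : M) else f n) ∘ (fun n : ℕ => n + k)) =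
        fun n => f (n + k) := by
      funext n; simp [Function.comp, Nat.not_lt.mpr (Nat.le_add_left k n)]
    exact (hinj.hasProd_iff hoff).mp (by rw [hcomp]; exact h)
  have h3 : (fun n => (if n < k then f n else 1) * (if n < k then 1 else f n)) = f := by
    funext n; split <;> simp
  have := h1.mul h2
  rwa [h3] at this

lemma aux_tprod_split [T2Space M] (f : ℕ → M) (k : ℕ) {a : M}
    (h : HasProd (fun n => f (n + k)) a) :
    ∏' n, f n = (∏ i ∈ Finset.range k, f i) * a :=
  (aux_hasProd_split f k h).tprod_eq

end AuxSplit

section AuxReal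

variable {q : ℝ}

lemma aux_summable_log (hq0 : 0 ≤ q) (hq1 : q < 1) {r : ℝ} (hr : 0 ≤ r) :
    Summable fun i : ℕ => Real.log (1 + r * q ^ i) := by
  refine Summable.of_nonneg_of_le (fun i => Real.log_nonneg (by nlinarith [mul_nonneg hr (pow_nonneg hq0 i)])) (fun i => ?_)
    ((summable_geometric_of_lt_one hq0 hq1).mul_left r)
  have h1 : 0 < 1 + r * q ^ i := by positivity
  have := Real.log_le_sub_one_of_pos h1
  linarith

lemma aux_hasProd_P (hq0 : 0 ≤ q) (hq1 : q < 1) {r : ℝ} (hr : 0 ≤ r) :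
    HasProd (fun i : ℕ => 1 + r * q ^ i)
      (Real.exp (∑' i : ℕ, Real.log (1 + r * q ^ i))) := by
  have h := ((aux_summable_log hq0 hq1 hr).hasSum).rexp
  have h2 : (Real.exp ∘ fun i : ℕ => Real.log (1 + r * q ^ i)) = fun i : ℕ => 1 + r * q ^ i := by
    funext i; exact Real.exp_log (by positivity)
  rwa [h2] at h

lemma aux_P_mult (hq0 : 0 ≤ q) (hq1 : q < 1) {r : ℝ} (hr : 0 ≤ r) :
    Multipliable fun i : ℕ => 1 + r * q ^ i :=
  ⟨_, aux_hasProd_P hq0 hq1 hr⟩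

lemma aux_P_pos (hq0 : 0 ≤ q) (hq1 : q < 1) {r : ℝ} (hr : 0 ≤ r) :
    0 < ∏' i : ℕ, (1 + r * q ^ i) := by
  rw [(aux_hasProd_P hq0 hq1 hr).tprod_eq]
  exact Real.exp_pos _

lemma aux_prod_le_tprod {f : ℕ → ℝ} (h1 : ∀ i, 1 ≤ f i) (hm : Multipliable f) (s : Finset ℕ) :
    ∏ i ∈ s, f i ≤ ∏' i, f i := by
  refine ge_of_tendsto hm.hasProd (eventually_atTop.2 ⟨s, fun t hst => ?_⟩)
  have h2 : ∏ i ∈ s, f i ≤ (∏ i ∈ t \ s, f i) * ∏ i ∈ s, f i := by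
    refine le_mul_of_one_le_left (Finset.prod_nonneg fun i _ => zero_le_one.trans (h1 i)) ?_
    have := Finset.prod_le_prod (s := t \ s) (f := fun _ => (1:ℝ)) (g := f)
      (fun i _ => zero_le_one) (fun i _ => h1 i)
    simpa using this
  calc ∏ i ∈ s, f i ≤ (∏ i ∈ t \ s, f i) * ∏ i ∈ s, f i := h2
    _ = ∏ i ∈ t, f i := Finset.prod_sdiff hst

lemma aux_one_le_tprod {f : ℕ → ℝ} (h1 : ∀ i, 1 ≤ f i) (hm : Multipliable f) :
    1 ≤ ∏' i, f i := by
  simpa using aux_prod_le_tprod h1 hm ∅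

lemma aux_tprod_le_tprod {f g : ℕ → ℝ} (h1 : ∀ i, 1 ≤ f i) (hfg : ∀ i, f i ≤ g i)
    (hf : Multipliable f) (hg : Multipliable g) : ∏' i, f i ≤ ∏' i, g i := by
  refine hasProd_le_of_prod_le hf.hasProd fun s => ?_
  calc ∏ i ∈ s, f i ≤ ∏ i ∈ s, g i :=
        Finset.prod_le_prod (fun i _ => zero_le_one.trans (h1 i)) (fun i _ => hfg i)
    _ ≤ ∏' i, g i := aux_prod_le_tprod (fun i => (h1 i).trans (hfg i)) hg s

end AuxReal


lemma aux_circleIntegral_finset_sum {ι : Type*} (s : Finset ι) (F : ι → ℂ → ℂ) (c : ℂ) (R : ℝ)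
    (h : ∀ j ∈ s, CircleIntegrable (F j) c R) :
    (∮ z in C(c, R), ∑ j ∈ s, F j z) = ∑ j ∈ s, ∮ z in C(c, R), F j z := by
  simp only [circleIntegral, smul_sum]
  exact intervalIntegral.integral_finset_sum fun j hj => (h j hj).out

lemma aux_qpi_diff {q R : ℝ} (hq0 : 0 < q) (hq1 : q < 1) (hR : 0 < R) :
    ∃ P : ℂ → ℂ, DifferentiableOn ℂ P (Metric.ball 0 (R + 1)) ∧
      ∀ z ∈ Metric.ball (0 : ℂ) (R + 1), P z = ∏' i : ℕ, (1 - ((q : ℂ) * z) * (q : ℂ) ^ i) := by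
  have hc : (0:ℝ) < q * (R + 1) := by positivity
  obtain ⟨n₀, hn₀⟩ : ∃ n₀ : ℕ, q ^ n₀ * (q * (R + 1)) ≤ 1 / 2 := by
    have ht := tendsto_pow_atTop_nhds_zero_of_lt_one hq0.le hq1
    have : ∀ᶠ n : ℕ in atTop, q ^ n < (1/2) / (q * (R+1)) :=
      (tendsto_order.mp ht).2 _ (by positivity)
    obtain ⟨n₀, hn₀⟩ := this.exists
    exact ⟨n₀, by rw [← le_div_iff₀ hc]; exact hn₀.le⟩
  set w : ℕ → ℂ → ℂ := fun i z => ((q : ℂ) * z) * (q : ℂ) ^ (i + n₀) with hw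
  have hqC : ‖(q:ℂ)‖ = q := by
    rw [Complex.norm_real, Real.norm_eq_abs, abs_of_pos hq0]
  have hwnorm : ∀ (i : ℕ), ∀ z ∈ Metric.ball (0:ℂ) (R+1), ‖w i z‖ ≤ (1/2) * q ^ i := by
    intro i z hz
    have hz' : ‖z‖ < R + 1 := mem_ball_zero_iff.mp hz
    have h1 : ‖w i z‖ = q * ‖z‖ * q ^ (i + n₀) := by
      rw [hw]
      simp only [norm_mul, norm_pow, hqC]
    rw [h1]
    have h2 : q * ‖z‖ * q ^ (i + n₀) ≤ q * (R+1) * q ^ (i + n₀) :=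
      mul_le_mul_of_nonneg_right (mul_le_mul_of_nonneg_left hz'.le hq0.le)
        (pow_nonneg hq0.le (i + n₀))
    refine h2.trans ?_
    have h3 : q * (R+1) * q ^ (i + n₀) = (q ^ n₀ * (q * (R+1))) * q ^ i := by
      rw [pow_add]; ring
    rw [h3]
    have := pow_nonneg hq0.le i
    nlinarith
  have hlog : ∀ (i : ℕ), ∀ z ∈ Metric.ball (0:ℂ) (R+1),
      ‖Complex.log (1 - w i z)‖ ≤ (3/4) * q ^ i := by
    intro i z hz
    have h1 : ‖-w i z‖ ≤ 1/2 := by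
      rw [norm_neg]
      refine (hwnorm i z hz).trans ?_
      nlinarith [pow_le_one₀ hq0.le hq1.le (n := i), pow_nonneg hq0.le i]
    have h2 := Complex.norm_log_one_add_half_le_self h1
    rw [← sub_eq_add_neg] at h2
    refine h2.trans ?_
    rw [norm_neg]
    nlinarith [hwnorm i z hz]
  have hne : ∀ (i : ℕ), ∀ z ∈ Metric.ball (0:ℂ) (R+1), 1 - w i z ≠ 0 := by
    intro i z hz h
    have : (1:ℂ) = w i z := by linear_combination h
    have h2 := hwnorm i z hz
    rw [← this] at h2
    simp only [norm_one] at h2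
    nlinarith [pow_le_one₀ hq0.le hq1.le (n := i), pow_nonneg hq0.le i]
  have hwdiff : ∀ i : ℕ, Differentiable ℂ (fun z => 1 - w i z) := by
    intro i
    exact (differentiable_const _).sub (((differentiable_const _).mul differentiable_id).mul
      (differentiable_const _))
  have hslit : ∀ (i : ℕ), ∀ z ∈ Metric.ball (0:ℂ) (R+1), (1 - w i z) ∈ Complex.slitPlane := by
    intro i z hz
    left
    have h1 : |(w i z).re| ≤ ‖w i z‖ := Complex.abs_re_le_norm _
    have h2 := hwnorm i z hz
    have h3 : q ^ i ≤ 1 := pow_le_one₀ hq0.le hq1.le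
    simp only [Complex.sub_re, Complex.one_re]
    have := abs_le.mp h1
    nlinarith
  set L : ℂ → ℂ := fun z => ∑' i : ℕ, Complex.log (1 - w i z) with hL
  have hLdiff : DifferentiableOn ℂ L (Metric.ball 0 (R+1)) := by
    refine Complex.differentiableOn_tsum_of_summable_norm
      (u := fun i : ℕ => (3/4) * q ^ i)
      (((summable_geometric_of_lt_one hq0.le hq1)).mul_left _)
      (fun i => ?_) Metric.isOpen_ball (fun i z hz => hlog i z hz)
    intro z hz
    exact (((hwdiff i).differentiableAt).clog (hslit i z hz)).differentiableWithinAt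
  refine ⟨fun z => (∏ i ∈ Finset.range n₀, (1 - ((q : ℂ) * z) * (q : ℂ) ^ i)) *
    Complex.exp (L z), ?_, ?_⟩
  · refine DifferentiableOn.mul ?_ hLdiff.cexp
    refine DifferentiableOn.fun_finsetProd fun i _ => ?_
    exact ((differentiable_const _).sub (((differentiable_const _).mul differentiable_id).mul
      (differentiable_const _))).differentiableOn
  · intro z hz
    have hsum : Summable fun i : ℕ => Complex.log (1 - w i z) := by
      refine Summable.of_norm ?_
      refine Summable.of_nonneg_of_le (fun i => norm_nonneg _) (fun i => hlog i z hz) ?_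
      exact (summable_geometric_of_lt_one hq0.le hq1).mul_left _
    have hProdTail : HasProd (fun i : ℕ => 1 - w i z) (Complex.exp (L z)) := by
      have h := hsum.hasSum.cexp
      have h2 : (Complex.exp ∘ fun i : ℕ => Complex.log (1 - w i z)) =
          fun i : ℕ => 1 - w i z := by
        funext i; exact Complex.exp_log (hne i z hz)
      rwa [h2] at h
    have := aux_tprod_split (fun i : ℕ => 1 - ((q : ℂ) * z) * (q : ℂ) ^ i) n₀ hProdTail
    rw [this]

set_option maxHeartbeats 1000000 in
/-- if ρ is analytic on a disc of radius R > 1, then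
`M(r; D_{∞,q}f) = o((-r;q)_∞ / r^λ)` for every `λ < ln R / ln(1/q)`. -/
theorem stmt12 (q : ℝ) (hq0 : 0 < q) (hq1 : q < 1) (f : ℝ → ℝ)
    (hf : ContinuousOn f (Set.Icc 0 1)) (R : ℝ) (hR : 1 < R) (ρ : ℂ → ℂ)
    (hρa : AnalyticOnNhd ℂ ρ (Metric.closedBall 0 R))
    (hρ : ∀ z : ℂ, ‖z‖ < 1 / q →
      ρ z = ∑' j : ℕ, ((f (q ^ j) * q ^ j : ℝ) : ℂ) / qpC q q j * z ^ j)
    (lam : ℝ) (hlam : lam < Real.log R / Real.log (1 / q)) :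
    let g : ℂ → ℂ := fun z => qpiC q ((q : ℂ) * z) * ρ z
    let dd : ℕ → ℂ := fun k => ∑ j ∈ Finset.range (k + 1), g ((q : ℂ) ^ j) /
        ∏ i ∈ (Finset.range (k + 1)).erase j, ((q : ℂ) ^ j - (q : ℂ) ^ i)
    let D : ℂ → ℂ := fun z => ∑' k : ℕ, (-1) ^ k * (q : ℂ) ^ (k * (k - 1) / 2) * dd k * z ^ k
    (fun r : ℝ => sSup ((fun z => ‖D z‖) '' Metric.closedBall 0 r))
      =o[atTop] fun r : ℝ => qpiR q (-r) / r ^ lam := by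
  intro g dd D
  have hR0 : (0:ℝ) < R := by linarith
  -- exponent bookkeeping
  set c0 : ℝ := Real.log (1/q) with hc0def
  have hq_inv : 1 < 1/q := by rw [lt_div_iff₀ hq0]; linarith
  have hc0 : 0 < c0 := Real.log_pos hq_inv
  have hlogq : Real.log q = -c0 := by rw [hc0def, one_div, Real.log_inv]; ring
  have hqpow : ∀ n : ℕ, q ^ n = Real.exp (-((n:ℝ) * c0)) := by
    intro n
    rw [← Real.exp_log hq0, ← Real.exp_nat_mul, hlogq]
    ring_nf
  set α : ℝ := Real.log R / c0 with hαdef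
  have hα0 : 0 < α := div_pos (Real.log_pos hR) hc0
  set l0 : ℝ := max lam 0 with hl0def
  have hlaml0 : lam ≤ l0 := le_max_left _ _
  have hl00 : 0 ≤ l0 := le_max_right _ _
  have hl0α : l0 < α := max_lt hlam hα0
  set γ : ℝ := (2*l0 + α)/3 with hγdef
  set β : ℝ := (l0 + 2*α)/3 with hβdef
  have hγ0 : 0 < γ := by rw [hγdef]; linarith
  have hlamγ : lam < γ := by rw [hγdef]; linarith
  have hγβ : γ < β := by rw [hγdef, hβdef]; linarith
  have hβα : β < α := by rw [hβdef]; linarith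
  set R'' : ℝ := Real.exp (γ * c0) with hR''def
  set R₂ : ℝ := Real.exp (β * c0) with hR₂def
  have hR''1 : 1 < R'' := by
    rw [hR''def, show (1:ℝ) = Real.exp 0 from (Real.exp_zero).symm]
    exact Real.exp_lt_exp.mpr (by positivity)
  have hR''R₂ : R'' < R₂ := Real.exp_lt_exp.mpr (mul_lt_mul_of_pos_right hγβ hc0)
  have hexpα : Real.exp (α * c0) = R := by
    rw [hαdef, div_mul_cancel₀ _ (ne_of_gt hc0)]; exact Real.exp_log hR0
  have hR₂R : R₂ < R := by
    rw [← hexpα]; exact Real.exp_lt_exp.mpr (mul_lt_mul_of_pos_right hβα hc0)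
  have hR''pos : 0 < R'' := Real.exp_pos _
  have hR₂1 : 1 < R₂ := hR''1.trans hR''R₂
  have hR₂pos : 0 < R₂ := by linarith
  have hlogR'' : Real.log R'' = γ * c0 := Real.log_exp _
  set R₁ : ℝ := (R₂ + R)/2 with hR₁def
  have hR₂R₁ : R₂ < R₁ := by rw [hR₁def]; linarith
  have hR₁R : R₁ < R := by rw [hR₁def]; linarith
  have hR₁pos : 0 < R₁ := by rw [hR₁def]; linarith
  have hR₁1 : 1 < R₁ := by rw [hR₁def]; linarith
  set θ : ℝ := R₂ / R₁ with hθdef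
  have hθ0 : 0 < θ := div_pos hR₂pos hR₁pos
  have hθ1 : θ < 1 := (div_lt_one hR₁pos).mpr hR₂R₁
  -- the real infinite product
  set Pr : ℝ → ℝ := fun x => ∏' i : ℕ, (1 + x * q ^ i) with hPrdef
  have hPrpos : ∀ x : ℝ, 0 ≤ x → 0 < Pr x := fun x hx => aux_P_pos hq0.le hq1 hx
  have hPrmult : ∀ x : ℝ, 0 ≤ x → Multipliable (fun i : ℕ => 1 + x * q ^ i) :=
    fun x hx => aux_P_mult hq0.le hq1 hx
  have hfac1 : ∀ (x : ℝ), 0 ≤ x → ∀ i : ℕ, 1 ≤ 1 + x * q ^ i := by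
    intro x hx i; nlinarith [mul_nonneg hx (pow_nonneg hq0.le i)]
  have hPr1 : ∀ x : ℝ, 0 ≤ x → 1 ≤ Pr x := fun x hx =>
    aux_one_le_tprod (hfac1 x hx) (hPrmult x hx)
  have hqpiR : ∀ r : ℝ, qpiR q (-r) = Pr r := by
    intro r
    have h1 : qpiR q (-r) = ∏' i : ℕ, (1 - (-r) * q ^ i) := rfl
    rw [h1]; exact tprod_congr fun i => by ring
  have hshift : ∀ (t : ℝ), 0 ≤ t → ∀ m : ℕ,
      HasProd (fun i : ℕ => 1 + t * q ^ (i + m)) (Pr (t * q ^ m)) := by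
    intro t ht m
    have h2 : (fun i : ℕ => 1 + t * q ^ m * q ^ i) = fun i : ℕ => 1 + t * q ^ (i + m) := by
      funext i; rw [pow_add]; ring
    rw [← h2]
    exact (hPrmult (t * q ^ m) (by positivity)).hasProd
  have hPrsplit : ∀ (t : ℝ), 0 ≤ t → ∀ m : ℕ,
      Pr t = (∏ i ∈ Finset.range m, (1 + t * q ^ i)) * Pr (t * q ^ m) :=
    fun t ht m => aux_tprod_split _ m (hshift t ht m)
  -- holomorphy of g on the closed ball
  obtain ⟨P, hPdiff, hPeq⟩ := aux_qpi_diff (R := R) hq0 hq1 hR0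
  have hsubB : Metric.closedBall (0:ℂ) R ⊆ Metric.ball 0 (R+1) :=
    Metric.closedBall_subset_ball (by linarith)
  have hgdiff : DifferentiableOn ℂ g (Metric.closedBall 0 R) := by
    have h1 : DifferentiableOn ℂ (fun z => P z * ρ z) (Metric.closedBall 0 R) :=
      (hPdiff.mono hsubB).mul hρa.differentiableOn
    refine h1.congr fun z hz => ?_
    show g z = P z * ρ z
    rw [show g z = qpiC q ((q:ℂ)*z) * ρ z from rfl, show qpiC q ((q:ℂ)*z)
      = ∏' i : ℕ, (1 - ((q:ℂ)*z) * (q:ℂ)^i) from rfl, ← hPeq z (hsubB hz)]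
  have hgc : ContinuousOn g (Metric.closedBall 0 R) := hgdiff.continuousOn
  obtain ⟨Mg, hMg⟩ := (isCompact_closedBall (0:ℂ) R).exists_bound_of_continuousOn hgc
  have hMg0 : 0 ≤ Mg := (norm_nonneg (g 0)).trans (hMg 0 (Metric.mem_closedBall_self hR0.le))
  -- nodes
  have hqC : ‖(q:ℂ)‖ = q := by rw [Complex.norm_real, Real.norm_eq_abs, abs_of_pos hq0]
  have hxnorm : ∀ j : ℕ, ‖(q:ℂ) ^ j‖ = q ^ j := by intro j; rw [norm_pow, hqC]
  have hxle1 : ∀ j : ℕ, ‖(q:ℂ) ^ j‖ ≤ 1 := by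
    intro j; rw [hxnorm]; exact pow_le_one₀ hq0.le hq1.le
  have hnode : ∀ j : ℕ, (q:ℂ) ^ j ∈ Metric.ball (0:ℂ) R := by
    intro j; rw [mem_ball_zero_iff]; exact lt_of_le_of_lt (hxle1 j) hR
  have hqinj : Function.Injective (fun i : ℕ => (q:ℂ) ^ i) := by
    have hmono : StrictAnti (fun i : ℕ => q ^ i) := fun a b hab =>
      pow_lt_pow_right_of_lt_one₀ hq0 hq1 hab
    intro a b hab
    simp only at hab
    have h1 : ((q ^ a : ℝ) : ℂ) = ((q ^ b : ℝ) : ℂ) := by push_cast; exact hab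
    exact hmono.injective (Complex.ofReal_inj.mp h1)
  have hzx : ∀ z ∈ Metric.sphere (0:ℂ) R, ∀ i : ℕ, z - (q:ℂ)^i ≠ 0 := by
    intro z hz i h
    have h1 : ‖z‖ = R := mem_sphere_zero_iff_norm.mp hz
    have h2 : z = (q:ℂ)^i := by linear_combination h
    rw [h2, hxnorm] at h1
    nlinarith [pow_le_one₀ hq0.le hq1.le (n := i)]
  -- lower bound on the denominator product on the circle
  obtain ⟨n₁, hn₁⟩ : ∃ n : ℕ, q ^ n ≤ R - R₁ := by
    have ht := tendsto_pow_atTop_nhds_zero_of_lt_one hq0.le hq1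
    have h2 : ∀ᶠ n : ℕ in atTop, q ^ n < R - R₁ :=
      (tendsto_order.mp ht).2 _ (by linarith)
    obtain ⟨n, hn⟩ := h2.exists
    exact ⟨n, hn.le⟩
  set mv : ℝ := min ((R-1)/R₁) 1 with hmvdef
  have hmv0 : 0 < mv := lt_min (div_pos (by linarith) hR₁pos) one_pos
  have hmv1 : mv ≤ 1 := min_le_right _ _
  set cd : ℝ := mv ^ n₁ with hcddef
  have hcd0 : 0 < cd := pow_pos hmv0 _
  have hdenom : ∀ k : ℕ, ∀ z ∈ Metric.sphere (0:ℂ) R,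
      cd * R₁ ^ (k+1) ≤ ∏ i ∈ Finset.range (k+1), ‖z - (q:ℂ)^i‖ := by
    intro k z hz
    classical
    have h1 : ‖z‖ = R := mem_sphere_zero_iff_norm.mp hz
    have hfac : ∀ i : ℕ, R₁ * (if i < n₁ then mv else 1) ≤ ‖z - (q:ℂ)^i‖ := by
      intro i
      have h2 : R - q ^ i ≤ ‖z - (q:ℂ)^i‖ := by
        have h3 := norm_sub_norm_le z ((q:ℂ)^i)
        rw [h1, hxnorm] at h3
        exact h3
      have hqi1 : q ^ i ≤ 1 := pow_le_one₀ hq0.le hq1.le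
      by_cases hi : i < n₁
      · rw [if_pos hi]
        have h5 : mv ≤ (R-1)/R₁ := min_le_left _ _
        have h4 : R₁ * mv ≤ R - 1 := by
          calc R₁ * mv ≤ R₁ * ((R-1)/R₁) := mul_le_mul_of_nonneg_left h5 hR₁pos.le
            _ = R - 1 := by field_simp
        linarith
      · rw [if_neg hi, mul_one]
        have h4 : q ^ i ≤ q ^ n₁ := pow_le_pow_of_le_one hq0.le hq1.le (Nat.le_of_not_lt hi)
        linarith
    have h2 : ∏ i ∈ Finset.range (k+1), (R₁ * (if i < n₁ then mv else 1))
        ≤ ∏ i ∈ Finset.range (k+1), ‖z - (q:ℂ)^i‖ := by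
      refine Finset.prod_le_prod (fun i _ => ?_) (fun i _ => hfac i)
      have h6 : (0:ℝ) < if i < n₁ then mv else 1 := by
        by_cases h : i < n₁
        · rw [if_pos h]; exact hmv0
        · rw [if_neg h]; exact one_pos
      positivity
    refine le_trans ?_ h2
    rw [Finset.prod_mul_distrib, Finset.prod_const, Finset.card_range]
    have h3 : ∏ i ∈ Finset.range (k+1), (if i < n₁ then mv else 1)
        = mv ^ ((Finset.range (k+1)).filter (· < n₁)).card := by
      rw [Finset.prod_ite, Finset.prod_const, Finset.prod_const_one, mul_one]
    have h4 : ((Finset.range (k+1)).filter (· < n₁)).card ≤ n₁ := by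
      have h7 : (Finset.range (k+1)).filter (· < n₁) ⊆ Finset.range n₁ := by
        intro i hi
        simp only [Finset.mem_filter, Finset.mem_range] at hi ⊢
        exact hi.2
      simpa using Finset.card_le_card h7
    have h5 : cd ≤ mv ^ ((Finset.range (k+1)).filter (· < n₁)).card := by
      rw [hcddef]; exact pow_le_pow_of_le_one hmv0.le hmv1 h4
    calc cd * R₁ ^ (k+1) ≤ mv ^ ((Finset.range (k+1)).filter (· < n₁)).card * R₁ ^ (k+1) :=
          mul_le_mul_of_nonneg_right h5 (by positivity)
      _ = R₁ ^ (k+1) * ∏ i ∈ Finset.range (k+1), (if i < n₁ then mv else 1) := by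
          rw [h3]; ring
  -- divided differences through Cauchy's formula
  have hdd : ∀ k : ℕ, ‖dd k‖ ≤ R * (Mg / (cd * R₁ ^ (k+1))) := by
    intro k
    classical
    set s : Finset ℕ := Finset.range (k+1) with hs
    set x : ℕ → ℂ := fun i => (q:ℂ)^i with hx
    have hxinj : Set.InjOn x ↑s := fun a _ b _ h => hqinj h
    set u : ℕ → ℂ := fun j => (∏ i ∈ s.erase j, (x j - x i))⁻¹ with hu
    have hpf : ∀ z ∈ Metric.sphere (0:ℂ) R,
        (∏ i ∈ s, (z - x i))⁻¹ = ∑ j ∈ s, u j * (z - x j)⁻¹ := by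
      intro z hz
      have hsne : s.Nonempty := ⟨0, by simp [hs]⟩
      have heval : ∑ j ∈ s, Polynomial.eval z (Lagrange.basis s x j) = 1 := by
        rw [← Polynomial.eval_finset_sum, Lagrange.sum_basis hxinj hsne, Polynomial.eval_one]
      have hbasis : ∀ j ∈ s, Polynomial.eval z (Lagrange.basis s x j)
          = u j * ∏ i ∈ s.erase j, (z - x i) := by
        intro j hj
        rw [hu]
        simp only [Lagrange.basis, Polynomial.eval_prod]
        rw [← Finset.prod_inv_distrib, ← Finset.prod_mul_distrib]
        refine Finset.prod_congr rfl fun i hi => ?_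
        simp [Lagrange.basisDivisor]
      have hkey : ∑ j ∈ s, u j * ∏ i ∈ s.erase j, (z - x i) = 1 := by
        rw [← heval]
        exact (Finset.sum_congr rfl hbasis).symm
      have h2 : ∀ j ∈ s, u j * (z - x j)⁻¹
          = (u j * ∏ i ∈ s.erase j, (z - x i)) * (∏ i ∈ s, (z - x i))⁻¹ := by
        intro j hj
        have h3 : ∏ i ∈ s, (z - x i) = (z - x j) * ∏ i ∈ s.erase j, (z - x i) :=
          (Finset.mul_prod_erase s _ hj).symm
        have h4 : ∏ i ∈ s.erase j, (z - x i) ≠ 0 :=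
          Finset.prod_ne_zero_iff.mpr fun i _ => hzx z hz i
        have h5 : z - x j ≠ 0 := hzx z hz j
        rw [h3, mul_inv]
        field_simp
      rw [Finset.sum_congr rfl h2, ← Finset.sum_mul, hkey, one_mul]
    have hgcs : ContinuousOn g (Metric.sphere 0 R) := hgc.mono Metric.sphere_subset_closedBall
    have hci : ∀ j ∈ s, CircleIntegrable (fun z => (u j * (z - x j)⁻¹) • g z) 0 R := by
      intro j _
      refine ContinuousOn.circleIntegrable hR0.le ?_
      refine ContinuousOn.fun_smul (continuousOn_const.fun_mul ?_) hgcs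
      exact ContinuousOn.inv₀ (continuousOn_id.sub continuousOn_const) fun z hz => hzx z hz j
    have hIeq : dd k = (2 * Real.pi * Complex.I : ℂ)⁻¹ •
        ∮ z in C(0, R), (∏ i ∈ s, (z - x i))⁻¹ • g z := by
      have hCauchy : ∀ j ∈ s, (∮ z in C(0,R), (z - x j)⁻¹ • g z)
          = (2 * Real.pi * Complex.I : ℂ) • g (x j) :=
        fun j _ => hgdiff.circleIntegral_sub_inv_smul (hnode j)
      have h1 : (∮ z in C(0,R), (∏ i ∈ s, (z - x i))⁻¹ • g z)
          = ∮ z in C(0,R), ∑ j ∈ s, (u j * (z - x j)⁻¹) • g z := by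
        refine circleIntegral.integral_congr hR0.le fun z hz => ?_
        rw [hpf z hz, Finset.sum_smul]
      have h2 : ∀ j ∈ s, (∮ z in C(0,R), (u j * (z - x j)⁻¹) • g z)
          = u j * ((2*Real.pi*Complex.I) * g (x j)) := by
        intro j hj
        have h3 : (fun z => (u j * (z - x j)⁻¹) • g z)
            = fun z => u j • ((z - x j)⁻¹ • g z) := by
          funext z
          simp only [smul_eq_mul]
          ring
        rw [h3, circleIntegral.integral_smul, hCauchy j hj]
        simp only [smul_eq_mul]
      rw [h1, aux_circleIntegral_finset_sum s _ 0 R hci, Finset.sum_congr rfl h2]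
      have h2pine : (2 * Real.pi * Complex.I : ℂ) ≠ 0 :=
        mul_ne_zero (mul_ne_zero two_ne_zero
          (Complex.ofReal_ne_zero.mpr Real.pi_ne_zero)) Complex.I_ne_zero
      have hddk : dd k = ∑ j ∈ s, g (x j) * u j := by
        show (∑ j ∈ Finset.range (k+1), g ((q:ℂ)^j) /
          ∏ i ∈ (Finset.range (k+1)).erase j, ((q:ℂ)^j - (q:ℂ)^i)) = _
        refine Finset.sum_congr rfl fun j hj => ?_
        rw [div_eq_mul_inv]
      rw [hddk, smul_eq_mul, Finset.mul_sum]
      refine Finset.sum_congr rfl fun j hj => ?_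
      field_simp
    rw [hIeq]
    refine circleIntegral.norm_two_pi_i_inv_smul_integral_le_of_norm_le_const hR0.le ?_
    intro z hz
    have hd := hdenom k z hz
    have hprodpos : (0:ℝ) < cd * R₁ ^ (k+1) := by positivity
    have hgb : ‖g z‖ ≤ Mg := hMg z (Metric.sphere_subset_closedBall hz)
    rw [norm_smul, norm_inv]
    have hnp : ‖∏ i ∈ s, (z - x i)‖ = ∏ i ∈ s, ‖z - x i‖ := norm_prod s fun i => z - x i
    rw [hnp]
    have hple : (∏ i ∈ s, ‖z - x i‖)⁻¹ ≤ (cd * R₁ ^ (k+1))⁻¹ :=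
      inv_anti₀ hprodpos hd
    calc (∏ i ∈ s, ‖z - x i‖)⁻¹ * ‖g z‖ ≤ (cd * R₁ ^ (k+1))⁻¹ * Mg :=
          mul_le_mul hple hgb (norm_nonneg _) (by positivity)
      _ = Mg / (cd * R₁ ^ (k+1)) := by ring
  -- bound on D
  set A : ℝ := Mg * R / (cd * R₁) with hAdef
  have hA0 : 0 ≤ A := div_nonneg (mul_nonneg hMg0 hR0.le) (by positivity)
  set K : ℝ := A * (1 - θ)⁻¹ with hKdef
  have hK0 : 0 ≤ K := mul_nonneg hA0 (inv_nonneg.mpr (by linarith))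
  have hD : ∀ r : ℝ, 0 ≤ r → ∀ z : ℂ, ‖z‖ ≤ r → ‖D z‖ ≤ K * Pr (r / R₂) := by
    intro r hr z hzr
    have hrR₂ : 0 ≤ r / R₂ := by positivity
    have hPm := hPrmult (r/R₂) hrR₂
    have hgeo : Summable (fun k : ℕ => (A * Pr (r/R₂)) * θ ^ k) :=
      ((summable_geometric_of_lt_one hθ0.le hθ1)).mul_left _
    have hterm : ∀ k : ℕ, ‖(-1:ℂ) ^ k * (q:ℂ) ^ (k * (k - 1) / 2) * dd k * z ^ k‖
        ≤ (A * Pr (r / R₂)) * θ ^ k := by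
      intro k
      have h1 : ‖(-1:ℂ) ^ k * (q:ℂ) ^ (k * (k - 1) / 2) * dd k * z ^ k‖
          = q ^ (k * (k - 1) / 2) * ‖dd k‖ * ‖z‖ ^ k := by
        simp only [norm_mul, norm_pow, norm_neg, norm_one, one_pow, one_mul, hqC]
      have h2 : ‖z‖ ^ k ≤ r ^ k := pow_le_pow_left₀ (norm_nonneg z) hzr k
      have hqe0 : (0:ℝ) ≤ q ^ (k * (k - 1) / 2) := pow_nonneg hq0.le _
      have hRMg : (0:ℝ) ≤ R * (Mg / (cd * R₁ ^ (k+1))) := by positivity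
      have h3 : q ^ (k * (k - 1) / 2) * ‖dd k‖ * ‖z‖ ^ k
          ≤ q ^ (k * (k - 1) / 2) * ((R * (Mg / (cd * R₁ ^ (k+1)))) * r ^ k) := by
        have t1 : ‖dd k‖ * ‖z‖ ^ k ≤ (R * (Mg / (cd * R₁ ^ (k+1)))) * r ^ k :=
          mul_le_mul (hdd k) h2 (pow_nonneg (norm_nonneg z) k) hRMg
        calc q ^ (k * (k - 1) / 2) * ‖dd k‖ * ‖z‖ ^ k
            = q ^ (k * (k - 1) / 2) * (‖dd k‖ * ‖z‖ ^ k) := by ring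
          _ ≤ _ := mul_le_mul_of_nonneg_left t1 hqe0
      have key : ∀ cdv R₁v Mgv Rv rv qe : ℝ, cdv ≠ 0 → R₁v ≠ 0 →
          qe * ((Rv * (Mgv / (cdv * R₁v ^ (k+1)))) * rv ^ k)
          = (Mgv * Rv / (cdv * R₁v)) * (qe * (rv / R₁v) ^ k) := by
        intro cdv R₁v Mgv Rv rv qe h1 h2
        rw [div_pow, pow_succ]
        field_simp
      have h4 : q ^ (k * (k - 1) / 2) * ((R * (Mg / (cd * R₁ ^ (k+1)))) * r ^ k)
          = A * (q ^ (k * (k - 1) / 2) * (r / R₁) ^ k) := by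
        rw [hAdef]
        exact key cd R₁ Mg R r _ (ne_of_gt hcd0) (ne_of_gt hR₁pos)
      have hgauss : q ^ (k * (k - 1) / 2) = ∏ i ∈ Finset.range k, q ^ i := by
        rw [Finset.prod_pow_eq_pow_sum, Finset.sum_range_id]
      have h6 : q ^ (k*(k-1)/2) * (r/R₁) ^ k = ∏ i ∈ Finset.range k, (q ^ i * (r/R₁)) := by
        rw [hgauss, Finset.prod_mul_distrib, Finset.prod_const, Finset.card_range]
      have h7 : ∀ i : ℕ, q ^ i * (r/R₁) = θ * ((r/R₂) * q ^ i) := by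
        intro i; rw [hθdef]; field_simp
      have h8 : ∏ i ∈ Finset.range k, (q ^ i * (r/R₁))
          = θ ^ k * ∏ i ∈ Finset.range k, ((r/R₂) * q ^ i) := by
        rw [Finset.prod_congr rfl (fun i _ => h7 i), Finset.prod_mul_distrib,
          Finset.prod_const, Finset.card_range]
      have h9 : ∏ i ∈ Finset.range k, ((r/R₂) * q ^ i)
          ≤ ∏ i ∈ Finset.range k, (1 + (r/R₂) * q ^ i) := by
        refine Finset.prod_le_prod (fun i _ => by positivity)
          (fun i _ => le_add_of_nonneg_left zero_le_one)
      have h10 : ∏ i ∈ Finset.range k, (1 + (r/R₂) * q ^ i) ≤ Pr (r/R₂) :=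
        aux_prod_le_tprod (hfac1 _ hrR₂) hPm _
      have h11 : q ^ (k*(k-1)/2) * (r/R₁) ^ k ≤ θ ^ k * Pr (r/R₂) := by
        rw [h6, h8]
        have := mul_le_mul_of_nonneg_left (h9.trans h10) (pow_nonneg hθ0.le k)
        exact this
      rw [h1]
      refine h3.trans ?_
      rw [h4]
      calc A * (q ^ (k*(k-1)/2) * (r/R₁) ^ k) ≤ A * (θ ^ k * Pr (r/R₂)) :=
            mul_le_mul_of_nonneg_left h11 hA0
        _ = (A * Pr (r/R₂)) * θ ^ k := by ring
    have hsumm : Summable (fun k : ℕ =>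
        ‖(-1:ℂ) ^ k * (q:ℂ) ^ (k * (k - 1) / 2) * dd k * z ^ k‖) :=
      Summable.of_nonneg_of_le (fun k => norm_nonneg _) hterm hgeo
    have hDz : D z = ∑' k : ℕ, (-1:ℂ) ^ k * (q:ℂ) ^ (k * (k - 1) / 2) * dd k * z ^ k := rfl
    rw [hDz]
    refine le_trans (norm_tsum_le_tsum_norm hsumm) ?_
    refine le_trans (Summable.tsum_le_tsum hterm hsumm hgeo) ?_
    rw [tsum_mul_left, tsum_geometric_of_lt_one hθ0.le hθ1, hKdef]
    exact le_of_eq (by ring)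
  -- the comparison constants
  set T : ℝ := max 1 ((R''-1)/(1 - R''/R₂)) with hTdef
  have hT1 : 1 ≤ T := le_max_left _ _
  have hT0 : 0 < T := by linarith
  have hTfact : ∀ a : ℝ, T ≤ a → R'' * (1 + a/R₂) ≤ 1 + a := by
    intro a ha
    have h1 : 0 < 1 - R''/R₂ := by
      rw [sub_pos, div_lt_one hR₂pos]; exact hR''R₂
    have h2 : (R''-1)/(1-R''/R₂) ≤ a := le_trans (le_max_right _ _) ha
    rw [div_le_iff₀ h1] at h2
    have h3 : R'' * (1 + a/R₂) = R'' + a * (R''/R₂) := by field_simp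
    have h4 : a * (1 - R''/R₂) = a - a * (R''/R₂) := by ring
    rw [h4] at h2
    linarith
  -- final assembly
  rw [Asymptotics.isLittleO_iff]
  intro ε hε
  have hPTpos : 0 < Pr T := hPrpos T hT0.le
  set c2 : ℝ := K * Pr T with hc2def
  have hc20 : 0 ≤ c2 := mul_nonneg hK0 hPTpos.le
  have hev2 : ∀ᶠ r : ℝ in atTop, c2 * T ^ (γ:ℝ) / ε ≤ r ^ (γ - lam) :=
    (tendsto_rpow_atTop (by linarith : 0 < γ - lam)).eventually_ge_atTop _
  filter_upwards [eventually_ge_atTop (max T 1), hev2] with r hr1 hr2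
  have hrT : T ≤ r := le_trans (le_max_left _ _) hr1
  have hr1' : (1:ℝ) ≤ r := le_trans (le_max_right _ _) hr1
  have hr0 : (0:ℝ) < r := by linarith
  set xx : ℝ := Real.log (r/T) / c0 with hxxdef
  have hrT1 : 1 ≤ r / T := (one_le_div hT0).mpr hrT
  have hxx0 : 0 ≤ xx := div_nonneg (Real.log_nonneg hrT1) hc0.le
  set m : ℕ := ⌈xx⌉₊ with hmdef
  have hmge : xx ≤ (m:ℝ) := Nat.le_ceil xx
  have hmlt : (m:ℝ) ≤ xx + 1 := le_of_lt (Nat.ceil_lt_add_one hxx0)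
  have hxxc0 : xx * c0 = Real.log (r/T) := div_mul_cancel₀ _ (ne_of_gt hc0)
  have hexp : Real.exp (-(xx * c0)) = T / r := by
    rw [hxxc0, ← Real.log_inv, Real.exp_log (by positivity), inv_div]
  have hqm : q ^ m * r ≤ T := by
    have h1 : q ^ m ≤ Real.exp (-(xx * c0)) := by
      rw [hqpow m]
      exact Real.exp_le_exp.mpr (neg_le_neg (mul_le_mul_of_nonneg_right hmge hc0.le))
    rw [hexp] at h1
    calc q ^ m * r ≤ (T / r) * r := mul_le_mul_of_nonneg_right h1 hr0.le
      _ = T := by field_simp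
  have hqi : ∀ i : ℕ, i < m → T ≤ q ^ i * r := by
    intro i hi
    have h1 : (i:ℝ) ≤ xx := by
      have h2 : (i:ℝ) + 1 ≤ (m:ℝ) := by exact_mod_cast Nat.succ_le_of_lt hi
      linarith
    have h2 : Real.exp (-(xx * c0)) ≤ q ^ i := by
      rw [hqpow i]
      exact Real.exp_le_exp.mpr (neg_le_neg (mul_le_mul_of_nonneg_right h1 hc0.le))
    rw [hexp] at h2
    calc T = (T / r) * r := by field_simp
      _ ≤ q ^ i * r := mul_le_mul_of_nonneg_right h2 hr0.le
  set s2 : ℝ := r / R₂ with hs2def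
  have hs20 : 0 ≤ s2 := by positivity
  set Q : ℝ := ∏ i ∈ Finset.range m, (1 + s2 * q ^ i) with hQdef
  have hQpos : 0 < Q := Finset.prod_pos fun i _ =>
    lt_of_lt_of_le zero_lt_one (hfac1 s2 hs20 i)
  have hF1 : R'' ^ m * Q ≤ Pr r := by
    have h1 : ∀ i ∈ Finset.range m, R'' * (1 + s2 * q ^ i) ≤ 1 + r * q ^ i := by
      intro i hi
      have h2 := hTfact (q ^ i * r) (hqi i (Finset.mem_range.mp hi))
      have h3 : s2 * q ^ i = (q ^ i * r) / R₂ := by rw [hs2def]; ring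
      rw [h3]
      calc R'' * (1 + (q ^ i * r)/R₂) ≤ 1 + q ^ i * r := h2
        _ = 1 + r * q ^ i := by ring
    have h4 : R'' ^ m * Q = ∏ i ∈ Finset.range m, (R'' * (1 + s2 * q ^ i)) := by
      rw [Finset.prod_mul_distrib, Finset.prod_const, Finset.card_range, hQdef]
    have h5 : ∏ i ∈ Finset.range m, (R'' * (1 + s2 * q ^ i))
        ≤ ∏ i ∈ Finset.range m, (1 + r * q ^ i) := by
      refine Finset.prod_le_prod (fun i _ => ?_) h1
      exact mul_nonneg hR''pos.le (zero_le_one.trans (hfac1 s2 hs20 i))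
    have h6 : (1:ℝ) ≤ Pr (r * q ^ m) := hPr1 _ (by positivity)
    have h7 : (0:ℝ) ≤ ∏ i ∈ Finset.range m, (1 + r * q ^ i) :=
      Finset.prod_nonneg fun i _ => zero_le_one.trans (hfac1 r hr0.le i)
    calc R'' ^ m * Q = ∏ i ∈ Finset.range m, (R'' * (1 + s2 * q ^ i)) := h4
      _ ≤ ∏ i ∈ Finset.range m, (1 + r * q ^ i) := h5
      _ ≤ (∏ i ∈ Finset.range m, (1 + r * q ^ i)) * Pr (r * q ^ m) :=
          le_mul_of_one_le_right h7 h6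
      _ = Pr r := (hPrsplit r hr0.le m).symm
  have hF2 : Pr s2 ≤ Q * Pr T := by
    rw [hPrsplit s2 hs20 m, ← hQdef]
    refine mul_le_mul_of_nonneg_left ?_ hQpos.le
    refine aux_tprod_le_tprod (hfac1 _ (by positivity)) (fun i => ?_)
      (hPrmult _ (by positivity)) (hPrmult T hT0.le)
    have h1 : s2 * q ^ m ≤ T := by
      have h2 : s2 ≤ r := by rw [hs2def]; exact div_le_self hr0.le hR₂1.le
      have h3 : s2 * q ^ m ≤ r * q ^ m :=
        mul_le_mul_of_nonneg_right h2 (pow_nonneg hq0.le m)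
      calc s2 * q ^ m ≤ r * q ^ m := h3
        _ = q ^ m * r := by ring
        _ ≤ T := hqm
    exact add_le_add_right (mul_le_mul_of_nonneg_right h1 (pow_nonneg hq0.le i)) 1
  have hsSle : sSup ((fun z => ‖D z‖) '' Metric.closedBall 0 r) ≤ K * Pr s2 := by
    refine Real.sSup_le ?_ (mul_nonneg hK0 (hPrpos s2 hs20).le)
    rintro y ⟨z, hz, rfl⟩
    exact hD r hr0.le z (mem_closedBall_zero_iff.mp hz)
  have hsS0 : 0 ≤ sSup ((fun z => ‖D z‖) '' Metric.closedBall 0 r) := by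
    refine Real.sSup_nonneg ?_
    rintro y ⟨z, hz, rfl⟩
    exact norm_nonneg _
  have hRHS : ‖qpiR q (-r) / r ^ lam‖ = Pr r / r ^ lam := by
    rw [hqpiR, Real.norm_eq_abs, abs_of_nonneg]
    exact div_nonneg (hPrpos r hr0.le).le (Real.rpow_nonneg hr0.le _)
  show ‖sSup ((fun z => ‖D z‖) '' Metric.closedBall 0 r)‖ ≤ ε * ‖qpiR q (-r) / r ^ lam‖
  rw [hRHS, Real.norm_eq_abs, abs_of_nonneg hsS0]
  have hRm : (0:ℝ) < R'' ^ m := pow_pos hR''pos m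
  have hQle : Q ≤ Pr r / R'' ^ m := by
    rw [le_div_iff₀ hRm]
    calc Q * R'' ^ m = R'' ^ m * Q := mul_comm _ _
      _ ≤ Pr r := hF1
  have hmain : K * Pr s2 ≤ c2 * (Pr r / R'' ^ m) := by
    calc K * Pr s2 ≤ K * (Q * Pr T) := mul_le_mul_of_nonneg_left hF2 hK0
      _ = c2 * Q := by rw [hc2def]; ring
      _ ≤ c2 * (Pr r / R'' ^ m) := mul_le_mul_of_nonneg_left hQle hc20
  have hrpow : (r / T) ^ (γ:ℝ) ≤ (R'' : ℝ) ^ m := by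
    have h1 : ((R'' : ℝ) ^ m : ℝ) = R'' ^ ((m:ℕ):ℝ) := (Real.rpow_natCast R'' m).symm
    rw [h1]
    have h2 : R'' ^ (xx:ℝ) ≤ R'' ^ ((m:ℕ):ℝ) := Real.rpow_le_rpow_of_exponent_le hR''1.le hmge
    refine le_trans (le_of_eq ?_) h2
    rw [Real.rpow_def_of_pos (by positivity : (0:ℝ) < r/T),
      Real.rpow_def_of_pos hR''pos, hlogR'', ← hxxc0]
    congr 1
    ring
  have hTγ : (0:ℝ) < T ^ (γ:ℝ) := Real.rpow_pos_of_pos hT0 _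
  have hrl : (0:ℝ) < r ^ lam := Real.rpow_pos_of_pos hr0 _
  have hfin : c2 * r ^ lam ≤ ε * R'' ^ m := by
    have h1 : (r/T) ^ (γ:ℝ) = r ^ (γ - lam) * r ^ lam / T ^ (γ:ℝ) := by
      rw [Real.div_rpow hr0.le hT0.le, ← Real.rpow_add hr0]
      norm_num
    have h2 : c2 * T ^ (γ:ℝ) ≤ ε * r ^ (γ - lam) := by
      rw [div_le_iff₀ hε] at hr2
      linarith
    have h3 : ε * (r/T) ^ (γ:ℝ) ≤ ε * R'' ^ m := mul_le_mul_of_nonneg_left hrpow hε.le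
    refine le_trans ?_ h3
    rw [h1]
    have h4 : ε * (r ^ (γ - lam) * r ^ lam / T ^ (γ:ℝ))
        = ε * r ^ (γ - lam) * r ^ lam / T ^ (γ:ℝ) := by ring
    rw [h4, le_div_iff₀ hTγ]
    have h5 : c2 * T ^ (γ:ℝ) * r ^ lam ≤ ε * r ^ (γ - lam) * r ^ lam :=
      mul_le_mul_of_nonneg_right h2 hrl.le
    calc c2 * r ^ lam * T ^ (γ:ℝ) = c2 * T ^ (γ:ℝ) * r ^ lam := by ring
      _ ≤ ε * r ^ (γ - lam) * r ^ lam := h5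
  have h5 : c2 * (Pr r / R'' ^ m) ≤ ε * (Pr r / r ^ lam) := by
    have h6 : c2 * (Pr r / R'' ^ m) = c2 * Pr r / R'' ^ m := by ring
    have h7 : ε * (Pr r / r ^ lam) = ε * Pr r / r ^ lam := by ring
    rw [h6, h7, div_le_div_iff₀ hRm hrl]
    have h8 := mul_le_mul_of_nonneg_right hfin (hPrpos r hr0.le).le
    calc c2 * Pr r * r ^ lam = c2 * r ^ lam * Pr r := by ring
      _ ≤ ε * R'' ^ m * Pr r := h8
      _ = ε * Pr r * R'' ^ m := by ring
  calc sSup ((fun z => ‖D z‖) '' Metric.closedBall 0 r) ≤ K * Pr s2 := hsSle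
    _ ≤ c2 * (Pr r / R'' ^ m) := hmain
    _ ≤ ε * (Pr r / r ^ lam) := h5
end
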